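/- arXiv:math/0311033 — 7 statements merged into one kernel-verified Lean document; each statement's English description precedes it below -/
import Mathlib

section
/- For complex q with |q|<1 and integer s≥1, ζ_q(s) = ∑_{j=1}^{s-1} (-1)^{s-1-j} S(s-1,j) · j! · ∑_{k≥1} q^k/(1-q^k)^{j+1}, where S(N,j) are the Stirling numbers of the second kind (with the convention that for s=1 the sum over j is empty and ζ_q(1)=∑_{k≥1} q^k/(1-q^k)). -/
open Finset Polynomial

namespace ZetaqAux

lemma sig_ext {n m : ℕ} (d : {d : ℕ // d ∈ (n + 1).divisors})
    (e : {d : ℕ // d ∈ (m + 1).divisors}) (h1 : n = m) (h2 : (d : ℕ) = e) :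
    (⟨n, d⟩ : Σ n : ℕ, {d : ℕ // d ∈ (n + 1).divisors}) = ⟨m, e⟩ := by
  subst h1
  exact congrArg _ (Subtype.ext h2)

def divEquiv : ℕ × ℕ ≃ Σ n : ℕ, {d : ℕ // d ∈ (n + 1).divisors} where
  toFun p := ⟨(p.1 + 1) * (p.2 + 1) - 1, ⟨p.1 + 1, by
    have h1 : 1 ≤ (p.1 + 1) * (p.2 + 1) := Nat.one_le_iff_ne_zero.mpr (by positivity)
    have h : (p.1 + 1) * (p.2 + 1) - 1 + 1 = (p.1 + 1) * (p.2 + 1) := by omega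
    rw [Nat.mem_divisors, h]
    exact ⟨dvd_mul_right _ _, by positivity⟩⟩⟩
  invFun x := (x.2.1 - 1, (x.1 + 1) / x.2.1 - 1)
  left_inv := by
    rintro ⟨k, l⟩
    have h1 : 1 ≤ (k + 1) * (l + 1) := Nat.one_le_iff_ne_zero.mpr (by positivity)
    have h : (k + 1) * (l + 1) - 1 + 1 = (k + 1) * (l + 1) := by omega
    simp only [Prod.mk.injEq]
    refine ⟨by omega, ?_⟩
    rw [h, Nat.mul_div_cancel_left _ (Nat.succ_pos k)]
    omega
  right_inv := by
    rintro ⟨n, d, hd⟩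
    obtain ⟨hdvd, -⟩ := Nat.mem_divisors.mp hd
    have hd1 : 1 ≤ d := Nat.pos_of_mem_divisors hd
    have hq1 : 1 ≤ (n + 1) / d := Nat.div_pos (Nat.le_of_dvd n.succ_pos hdvd) hd1
    have e3 : d * ((n + 1) / d) = n + 1 := Nat.mul_div_cancel' hdvd
    apply sig_ext
    · have e1 : d - 1 + 1 = d := by omega
      have e2 : (n + 1) / d - 1 + 1 = (n + 1) / d := by omega
      simp only [e1, e2, e3]
      omega
    · simp only []
      omega

variable {q : ℂ}

lemma normq_lt_one (hq : ‖q‖ < 1) : ‖q‖ < 1 := by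
  exact hq

lemma norm_q_pow_lt_one (hq : ‖q‖ < 1) (m : ℕ) : ‖q ^ (m + 1)‖ < 1 := by
  rw [norm_pow]
  calc ‖q‖ ^ (m + 1) ≤ ‖q‖ ^ 1 :=
        pow_le_pow_of_le_one (norm_nonneg q) (normq_lt_one hq).le (by omega)
    _ < 1 := by rw [pow_one]; exact normq_lt_one hq

lemma summable_gen (hq : ‖q‖ < 1) (c : ℕ → ℂ)
    (hc : Summable fun k : ℕ => ‖c k‖ * ‖q‖ ^ (k + 1)) :
    Summable fun p : ℕ × ℕ => c p.1 * q ^ ((p.1 + 1) * (p.2 + 1)) := by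
  have hq' : ‖q‖ < 1 := normq_lt_one hq
  apply Summable.of_norm_bounded (g := fun p : ℕ × ℕ => (‖c p.1‖ * ‖q‖ ^ (p.1 + 1)) * ‖q‖ ^ p.2)
  · exact hc.mul_of_nonneg (summable_geometric_of_lt_one (norm_nonneg q) hq')
      (fun k => by positivity) (fun l => by positivity)
  · intro p
    rw [norm_mul, norm_pow]
    have hle : p.1 + 1 + p.2 ≤ (p.1 + 1) * (p.2 + 1) := by
      have h1 : (p.1 + 1) * (p.2 + 1) = (p.1 + 1) * p.2 + (p.1 + 1) := by ring
      have h2 : p.2 ≤ (p.1 + 1) * p.2 := Nat.le_mul_of_pos_left p.2 (Nat.succ_pos p.1)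
      omega
    have h1 : ‖q‖ ^ ((p.1 + 1) * (p.2 + 1)) ≤ ‖q‖ ^ (p.1 + 1 + p.2) :=
      pow_le_pow_of_le_one (norm_nonneg q) hq'.le hle
    calc ‖c p.1‖ * ‖q‖ ^ ((p.1 + 1) * (p.2 + 1))
        ≤ ‖c p.1‖ * ‖q‖ ^ (p.1 + 1 + p.2) :=
          mul_le_mul_of_nonneg_left h1 (norm_nonneg _)
      _ = ‖c p.1‖ * ‖q‖ ^ (p.1 + 1) * ‖q‖ ^ p.2 := by rw [pow_add, mul_assoc]

lemma summable_pow_case (hq : ‖q‖ < 1) (N : ℕ) :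
    Summable fun p : ℕ × ℕ => ((p.1 + 1 : ℕ) : ℂ) ^ N * q ^ ((p.1 + 1) * (p.2 + 1)) := by
  apply summable_gen hq (fun k => ((k + 1 : ℕ) : ℂ) ^ N)
  have hr : ‖(‖q‖)‖ < 1 := by
    rw [Real.norm_eq_abs, abs_of_nonneg (norm_nonneg q)]; exact normq_lt_one hq
  have h : Summable fun n : ℕ => (n : ℝ) ^ N * ‖q‖ ^ n :=
    summable_pow_mul_geometric_of_norm_lt_one N hr
  have h2 := (summable_nat_add_iff 1).mpr h
  apply h2.congr
  intro k
  simp only [norm_pow, Complex.norm_natCast]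

lemma summable_choose_case (hq : ‖q‖ < 1) (j : ℕ) :
    Summable fun p : ℕ × ℕ => (((p.1 + j).choose j : ℕ) : ℂ) * q ^ ((p.1 + 1) * (p.2 + 1)) := by
  apply summable_gen hq (fun k => (((k + j).choose j : ℕ) : ℂ))
  have hr : ‖(‖q‖)‖ < 1 := by
    rw [Real.norm_eq_abs, abs_of_nonneg (norm_nonneg q)]; exact normq_lt_one hq
  have h : Summable fun n : ℕ => ((n + j).choose j : ℝ) * ‖q‖ ^ n :=
    summable_choose_mul_geometric_of_norm_lt_one j hr
  have h2 := h.mul_left ‖q‖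
  apply h2.congr
  intro k
  simp only [Complex.norm_natCast]
  rw [pow_succ]
  ring

set_option maxHeartbeats 1000000 in
lemma lambert_pow (hq : ‖q‖ < 1) (N : ℕ) :
    ∑' n : ℕ, (∑ d ∈ (n + 1).divisors, (d : ℂ) ^ N) * q ^ (n + 1) =
      ∑' p : ℕ × ℕ, ((p.1 + 1 : ℕ) : ℂ) ^ N * q ^ ((p.1 + 1) * (p.2 + 1)) := by
  have hs := summable_pow_case hq N
  set G : (Σ n : ℕ, {d : ℕ // d ∈ (n + 1).divisors}) → ℂ :=
    fun x => ((x.2 : ℕ) : ℂ) ^ N * q ^ (x.1 + 1) with hG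
  have hcomp : ∀ p : ℕ × ℕ, G (divEquiv p) =
      ((p.1 + 1 : ℕ) : ℂ) ^ N * q ^ ((p.1 + 1) * (p.2 + 1)) := by
    intro p
    have h1 : 1 ≤ (p.1 + 1) * (p.2 + 1) := Nat.one_le_iff_ne_zero.mpr (by positivity)
    have h : (p.1 + 1) * (p.2 + 1) - 1 + 1 = (p.1 + 1) * (p.2 + 1) := by omega
    simp only [hG, divEquiv, Equiv.coe_fn_mk, h]
  have hGsum : Summable G := by
    rw [← divEquiv.summable_iff]
    exact hs.congr fun p => (hcomp p).symm
  calc ∑' n : ℕ, (∑ d ∈ (n + 1).divisors, (d : ℂ) ^ N) * q ^ (n + 1)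
      = ∑' n : ℕ, ∑ d ∈ (n + 1).divisors, (d : ℂ) ^ N * q ^ (n + 1) := by
        refine tsum_congr fun n => ?_
        rw [Finset.sum_mul]
    _ = ∑' n : ℕ, ∑' d : {d : ℕ // d ∈ (n + 1).divisors}, ((d : ℕ) : ℂ) ^ N * q ^ (n + 1) := by
        refine tsum_congr fun n => ?_
        exact (Finset.tsum_subtype ((n + 1).divisors) fun d => (d : ℂ) ^ N * q ^ (n + 1)).symm
    _ = ∑' x : Σ n : ℕ, {d : ℕ // d ∈ (n + 1).divisors}, G x := (Summable.tsum_sigma hGsum).symm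
    _ = ∑' p : ℕ × ℕ, G (divEquiv p) := (divEquiv.tsum_eq G).symm
    _ = _ := tsum_congr hcomp

set_option maxHeartbeats 1000000 in
lemma choose_tsum (hq : ‖q‖ < 1) (j : ℕ) :
    ∑' p : ℕ × ℕ, (((p.1 + j).choose j : ℕ) : ℂ) * q ^ ((p.1 + 1) * (p.2 + 1)) =
      ∑' k : ℕ, q ^ (k + 1) / (1 - q ^ (k + 1)) ^ (j + 1) := by
  have hs := summable_choose_case hq j
  have hswap : Summable fun p : ℕ × ℕ =>
      (((p.2 + j).choose j : ℕ) : ℂ) * q ^ ((p.2 + 1) * (p.1 + 1)) :=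
    (Equiv.prodComm ℕ ℕ).summable_iff.mpr hs
  calc ∑' p : ℕ × ℕ, (((p.1 + j).choose j : ℕ) : ℂ) * q ^ ((p.1 + 1) * (p.2 + 1))
      = ∑' p : ℕ × ℕ, (((p.2 + j).choose j : ℕ) : ℂ) * q ^ ((p.2 + 1) * (p.1 + 1)) :=
        ((Equiv.prodComm ℕ ℕ).tsum_eq fun p : ℕ × ℕ =>
          (((p.1 + j).choose j : ℕ) : ℂ) * q ^ ((p.1 + 1) * (p.2 + 1))).symm
    _ = ∑' l : ℕ, ∑' k : ℕ, (((k + j).choose j : ℕ) : ℂ) * q ^ ((k + 1) * (l + 1)) :=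
        Summable.tsum_prod hswap
    _ = ∑' l : ℕ, q ^ (l + 1) / (1 - q ^ (l + 1)) ^ (j + 1) := by
        refine tsum_congr fun l => ?_
        have hx : ‖q ^ (l + 1)‖ < 1 := norm_q_pow_lt_one hq l
        have step1 : ∀ k : ℕ, (((k + j).choose j : ℕ) : ℂ) * q ^ ((k + 1) * (l + 1)) =
            q ^ (l + 1) * ((((k + j).choose j : ℕ) : ℂ) * (q ^ (l + 1)) ^ k) := by
          intro k
          rw [mul_comm (k + 1) (l + 1), pow_mul, pow_succ]
          ring
        rw [tsum_congr step1, tsum_mul_left,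
          tsum_choose_mul_geometric_of_norm_lt_one j hx, mul_one_div]

lemma stirling_eval (S : ℕ → ℕ → ℂ) (N : ℕ)
    (hSN : ∀ ℓ : ℕ, ((ℓ : ℂ)) ^ N = ∑ j ∈ Icc 1 N, S N j * ∏ i ∈ range j, ((ℓ : ℂ) - i))
    (z : ℂ) :
    z ^ N = ∑ j ∈ Icc 1 N, S N j * ∏ i ∈ range j, (z - i) := by
  have key : (X ^ N - ∑ j ∈ Icc 1 N, C (S N j) * ∏ i ∈ range j, (X - C ((i : ℕ) : ℂ))) = 0 := by
    apply eq_zero_of_infinite_isRoot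
    apply Set.infinite_of_injective_forall_mem (f := fun n : ℕ => (n : ℂ)) Nat.cast_injective
    intro n
    simp only [Set.mem_setOf_eq, IsRoot, eval_sub, eval_pow, eval_X, eval_finset_sum, eval_mul,
      eval_C, eval_prod]
    rw [sub_eq_zero]
    simpa using hSN n
  have h2 := congrArg (eval z) key
  simp only [eval_sub, eval_pow, eval_X, eval_finset_sum, eval_mul, eval_C, eval_prod,
    eval_zero] at h2
  rw [sub_eq_zero] at h2
  simpa using h2

lemma prod_neg_eq (k j : ℕ) :
    ∏ i ∈ range j, (-((k : ℂ) + 1) - i) =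
      (-1 : ℂ) ^ j * (j.factorial : ℂ) * (((k + j).choose j : ℕ) : ℂ) := by
  have hnat : ∏ i ∈ range j, (k + 1 + i) = (k + 1).ascFactorial j := by
    induction j with
    | zero => simp
    | succ j ih => rw [Finset.prod_range_succ, ih, Nat.ascFactorial_succ]; ring
  have hstep : ∀ i ∈ range j, (-((k : ℂ) + 1) - i) = (-1) * ((k + 1 + i : ℕ) : ℂ) := by
    intro i _
    push_cast
    ring
  rw [Finset.prod_congr rfl hstep, Finset.prod_mul_distrib, Finset.prod_const, card_range,
    ← Nat.cast_prod, hnat, Nat.ascFactorial_eq_factorial_mul_choose]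
  push_cast
  ring

lemma pow_eq_choose_sum (S : ℕ → ℕ → ℂ) (N : ℕ)
    (hSN : ∀ ℓ : ℕ, ((ℓ : ℂ)) ^ N = ∑ j ∈ Icc 1 N, S N j * ∏ i ∈ range j, ((ℓ : ℂ) - i))
    (k : ℕ) :
    ((k + 1 : ℕ) : ℂ) ^ N =
      ∑ j ∈ Icc 1 N, (-1 : ℂ) ^ (N - j) * S N j * (j.factorial : ℂ) *
        (((k + j).choose j : ℕ) : ℂ) := by
  have h := stirling_eval S N hSN (-((k : ℂ) + 1))
  rw [Finset.sum_congr rfl fun j _ => by rw [prod_neg_eq k j]] at h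
  have hneg : ((k + 1 : ℕ) : ℂ) ^ N = (-1 : ℂ) ^ N * (-((k : ℂ) + 1)) ^ N := by
    rw [← mul_pow]
    push_cast
    ring_nf
  rw [hneg, h, Finset.mul_sum]
  refine Finset.sum_congr rfl fun j hj => ?_
  have hjN : j ≤ N := (Finset.mem_Icc.mp hj).2
  have hpw : (-1 : ℂ) ^ N * (-1 : ℂ) ^ j = (-1 : ℂ) ^ (N - j) := by
    rw [← pow_add, show N + j = (N - j) + 2 * j by omega, pow_add, pow_mul, neg_one_sq,
      one_pow, mul_one]
  calc (-1 : ℂ) ^ N * (S N j * ((-1 : ℂ) ^ j * (j.factorial : ℂ) *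
        (((k + j).choose j : ℕ) : ℂ)))
      = ((-1 : ℂ) ^ N * (-1 : ℂ) ^ j) * S N j * (j.factorial : ℂ) *
        (((k + j).choose j : ℕ) : ℂ) := by ring
    _ = _ := by rw [hpw]

end ZetaqAux

/-- For complex `q` with `|q| < 1` and `s ≥ 1`,
`ζ_q(s) = ∑_{j=1}^{s-1} (-1)^{s-1-j} S(s-1,j) j! ∑_{k≥1} q^k/(1-q^k)^{j+1}`,
where `S(N,j)` are the Stirling numbers of the second kind (defined by
`ℓ^N = ∑_{j=1}^N S(N,j) ℓ(ℓ-1)⋯(ℓ-j+1)`), with the convention that for `s = 1`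
the sum over `j` is empty and `ζ_q(1) = ∑_{k≥1} q^k/(1-q^k)`. -/
theorem zetaq_eq_stirling_comb (q : ℂ) (hq : ‖q‖ < 1) (s : ℕ) (hs : 1 ≤ s)
    (S : ℕ → ℕ → ℂ)
    (hS : ∀ N : ℕ, 1 ≤ N → ∀ ℓ : ℕ,
      (ℓ : ℂ) ^ N = ∑ j ∈ Finset.Icc 1 N, S N j * ∏ i ∈ Finset.range j, ((ℓ : ℂ) - i)) :
    (2 ≤ s →
      ∑' k : ℕ, (∑ d ∈ (k + 1).divisors, (d : ℂ) ^ (s - 1)) * q ^ (k + 1) =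
        ∑ j ∈ Finset.Icc 1 (s - 1),
          (-1 : ℂ) ^ (s - 1 - j) * S (s - 1) j * (j.factorial : ℂ) *
            ∑' k : ℕ, q ^ (k + 1) / (1 - q ^ (k + 1)) ^ (j + 1)) ∧
    (s = 1 →
      ∑' k : ℕ, (∑ d ∈ (k + 1).divisors, (d : ℂ) ^ (s - 1)) * q ^ (k + 1) =
        ∑' k : ℕ, q ^ (k + 1) / (1 - q ^ (k + 1))) := by
  constructor
  · intro h2
    set N := s - 1 with hNdef
    have hN1 : 1 ≤ N := by omega
    have hSN := hS N hN1
    have hpt : ∀ p : ℕ × ℕ,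
        ((p.1 + 1 : ℕ) : ℂ) ^ N * q ^ ((p.1 + 1) * (p.2 + 1)) =
        ∑ j ∈ Finset.Icc 1 N, (-1 : ℂ) ^ (N - j) * S N j * (j.factorial : ℂ) *
          ((((p.1 + j).choose j : ℕ) : ℂ) * q ^ ((p.1 + 1) * (p.2 + 1))) := by
      intro p
      rw [ZetaqAux.pow_eq_choose_sum S N hSN p.1, Finset.sum_mul]
      exact Finset.sum_congr rfl fun j _ => by ring
    rw [ZetaqAux.lambert_pow hq N, tsum_congr hpt,
      Summable.tsum_finsetSum fun j _ => ((ZetaqAux.summable_choose_case hq j).mul_left _)]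
    exact Finset.sum_congr rfl fun j _ => by
      rw [tsum_mul_left, ZetaqAux.choose_tsum hq j]
  · rintro rfl
    calc ∑' k : ℕ, (∑ d ∈ (k + 1).divisors, (d : ℂ) ^ (1 - 1)) * q ^ (k + 1)
        = ∑' p : ℕ × ℕ, ((p.1 + 1 : ℕ) : ℂ) ^ (1 - 1) * q ^ ((p.1 + 1) * (p.2 + 1)) :=
          ZetaqAux.lambert_pow hq (1 - 1)
      _ = ∑' p : ℕ × ℕ, (((p.1 + 0).choose 0 : ℕ) : ℂ) * q ^ ((p.1 + 1) * (p.2 + 1)) :=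
          tsum_congr fun p => by simp
      _ = ∑' k : ℕ, q ^ (k + 1) / (1 - q ^ (k + 1)) ^ (0 + 1) := ZetaqAux.choose_tsum hq 0
      _ = ∑' k : ℕ, q ^ (k + 1) / (1 - q ^ (k + 1)) := by simp
end

section
/- For real q with 0<q<1 and integer s≥1, lim_{q→1⁻} (1-q)^s ζ_q(s) = (s-1)! ζ(s) for s≥2, where ζ is the Riemann zeta function. -/
/-!
Expanding each `q^m / (1 - q^m)` as a geometric series and swapping the two sums (a Lambert
series identity) gives `ζ_q(s) = ∑_{k ≥ 1} Li_{1-s}(q^k)`. Comparison with the binomial series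
squeezes `(1 - x)^s Li_{1-s}(x)` between `(s-1)! x^s` and `(s-1)! x`, so the `k`-th term
`(1 - q)^s Li_{1-s}(q^k)` tends to `(s-1)! / k^s`. Since `q^k ≤ e^{-k(1-q)}`, these terms are
bounded uniformly in `q` by a constant times `k^{-s}`, which is summable for `s ≥ 2`, and dominated
convergence for series (Tannery's theorem) gives the limit.
-/

open Filter Set Topology Nat

/-- The polylogarithm of negative order, `Li_{-p}(x) = ∑_{n ≥ 1} n^p x^n`. -/
noncomputable def negPolylog (p : ℕ) (x : ℝ) : ℝ := ∑' n : ℕ, ((n : ℝ) + 1) ^ p * x ^ (n + 1)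

theorem summable_negPolylog (p : ℕ) {x : ℝ} (hx : ‖x‖ < 1) :
    Summable fun n : ℕ => ((n : ℝ) + 1) ^ p * x ^ (n + 1) := by
  have h : Summable fun n : ℕ => (n : ℝ) ^ p * x ^ n :=
    summable_pow_mul_geometric_of_norm_lt_one (R := ℝ) p hx
  exact ((summable_nat_add_iff 1).2 h).congr fun n => by push_cast; rfl

theorem negPolylog_nonneg (p : ℕ) {x : ℝ} (hx : 0 ≤ x) : 0 ≤ negPolylog p x :=
  tsum_nonneg fun n => by positivity

theorem tsum_pow_mul_pow_div_one_sub_pow (p : ℕ) {q : ℝ} (hq : ‖q‖ < 1) :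
    ∑' m : ℕ, ((m : ℝ) + 1) ^ p * q ^ (m + 1) / (1 - q ^ (m + 1)) =
      ∑' k : ℕ, negPolylog p (q ^ (k + 1)) := by
  -- both sides equal `∑_{e ≥ 1} σ_p(e) q^e`
  have h := (tsum_pow_div_one_sub_eq_tsum_sigma hq p).trans
    (tsum_prod_pow_eq_tsum_sigma p hq).symm
  rw [tsum_pnat_eq_tsum_succ (f := fun n : ℕ => (n : ℝ) ^ p * q ^ n / (1 - q ^ n)),
    tsum_pnat_eq_tsum_succ (f := fun d : ℕ => ∑' c : ℕ+, (c : ℝ) ^ p * q ^ (d * c))] at h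
  simp only [Nat.cast_add, Nat.cast_one] at h
  rw [h]
  refine tsum_congr fun k => ?_
  rw [negPolylog, tsum_pnat_eq_tsum_succ (f := fun n : ℕ => (n : ℝ) ^ p * q ^ ((k + 1) * n))]
  simp [← pow_mul]

theorem one_sub_pow_mul_negPolylog_le (p : ℕ) {x : ℝ} (hx0 : 0 ≤ x) (hx1 : x < 1) :
    (1 - x) ^ (p + 1) * negPolylog p x ≤ p ! * x := by
  have hx : ‖x‖ < 1 := by rwa [Real.norm_of_nonneg hx0]
  have hgeom := (hasSum_choose_mul_geometric_of_norm_lt_one p hx).mul_left (p ! * x)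
  rw [← le_div_iff₀' (by bound), ← mul_one_div]
  refine hasSum_le (fun n => ?_) (summable_negPolylog p hx).hasSum hgeom
  have h : (n + 1) ^ p ≤ p ! * (n + p).choose p :=
    (Nat.pow_succ_le_ascFactorial (n + 1) p).trans_eq (Nat.ascFactorial_eq_factorial_mul_choose n p)
  calc ((n : ℝ) + 1) ^ p * x ^ (n + 1) ≤ (p ! * (n + p).choose p : ℕ) * x ^ (n + 1) := by
        gcongr; exact_mod_cast h
    _ = p ! * x * ((n + p).choose p * x ^ n) := by push_cast; ring

theorem le_one_sub_pow_mul_negPolylog (p : ℕ) {x : ℝ} (hx0 : 0 ≤ x) (hx1 : x < 1) :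
    p ! * x ^ (p + 1) ≤ (1 - x) ^ (p + 1) * negPolylog p x := by
  have hx : ‖x‖ < 1 := by rwa [Real.norm_of_nonneg hx0]
  have hgeom := (hasSum_choose_mul_geometric_of_norm_lt_one p hx).mul_left (p ! * x ^ (p + 1))
  rw [← div_le_iff₀' (by bound), div_eq_mul_one_div, ← hgeom.tsum_eq]
  refine le_trans (hgeom.summable.tsum_le_tsum (fun n => ?_)
    ((summable_negPolylog p hx).comp_injective (add_left_injective p)))
    (tsum_comp_le_tsum_of_inj (summable_negPolylog p hx) (fun n => by positivity)
      (add_left_injective p))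
  have h : p ! * (n + p).choose p ≤ (n + p + 1) ^ p := by
    rw [← Nat.descFactorial_eq_factorial_mul_choose]
    exact (Nat.descFactorial_le_pow _ _).trans (Nat.pow_le_pow_left (by omega) _)
  calc p ! * x ^ (p + 1) * ((n + p).choose p * x ^ n)
      = (p ! * (n + p).choose p : ℕ) * x ^ (n + p + 1) := by push_cast; ring
    _ ≤ ((n + p + 1 : ℕ) : ℝ) ^ p * x ^ (n + p + 1) := by gcongr; exact_mod_cast h
    _ = _ := by simp

theorem tendsto_one_sub_pow_mul_negPolylog (p : ℕ) :
    Tendsto (fun x => (1 - x) ^ (p + 1) * negPolylog p x) (𝓝[<] 1) (𝓝 (p ! : ℝ)) := by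
  have hlim (k : ℕ) : Tendsto (fun x : ℝ => (p ! : ℝ) * x ^ k) (𝓝[<] 1) (𝓝 (p ! : ℝ)) := by
    have : Continuous fun x : ℝ => (p ! : ℝ) * x ^ k := by fun_prop
    simpa using (this.tendsto 1).mono_left nhdsWithin_le_nhds
  refine tendsto_of_tendsto_of_tendsto_of_le_of_le' (hlim (p + 1)) (by simpa using hlim 1) ?_ ?_ <;>
    filter_upwards [Ioo_mem_nhdsLT zero_lt_one] with x hx
  · exact le_one_sub_pow_mul_negPolylog p hx.1.le hx.2
  · exact one_sub_pow_mul_negPolylog_le p hx.1.le hx.2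

theorem tendsto_one_sub_div_one_sub_pow {k : ℕ} (hk : k ≠ 0) :
    Tendsto (fun q : ℝ => (1 - q) / (1 - q ^ k)) (𝓝[≠] 1) (𝓝 (k : ℝ)⁻¹) := by
  have hsum : Tendsto (fun q : ℝ => (∑ i ∈ Finset.range k, q ^ i)⁻¹) (𝓝 1) (𝓝 (k : ℝ)⁻¹) := by
    have : Continuous fun q : ℝ => ∑ i ∈ Finset.range k, q ^ i := by fun_prop
    simpa using (this.tendsto 1).inv₀ (by simpa using hk)
  refine (hsum.mono_left nhdsWithin_le_nhds).congr' ?_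
  filter_upwards [self_mem_nhdsWithin] with q hq
  rw [← mul_neg_geom_sum, div_mul_cancel_left₀ (sub_ne_zero.2 (Ne.symm hq))]

theorem tendsto_pow_nhdsLT_one {k : ℕ} (hk : k ≠ 0) :
    Tendsto (fun q : ℝ => q ^ k) (𝓝[<] 1) (𝓝[<] 1) := by
  refine tendsto_nhdsWithin_iff.2 ⟨?_, ?_⟩
  · simpa using ((continuous_pow (M := ℝ) k).tendsto 1).mono_left nhdsWithin_le_nhds
  · filter_upwards [Ioo_mem_nhdsLT zero_lt_one] with q hq
    exact pow_lt_one₀ hq.1.le hq.2 hk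

theorem tendsto_one_sub_pow_mul_negPolylog_pow (p : ℕ) {k : ℕ} (hk : k ≠ 0) :
    Tendsto (fun q => (1 - q) ^ (p + 1) * negPolylog p (q ^ k)) (𝓝[<] 1)
      (𝓝 (p ! / (k : ℝ) ^ (p + 1))) := by
  have h := ((tendsto_one_sub_pow_mul_negPolylog p).comp (tendsto_pow_nhdsLT_one hk)).mul
    (((tendsto_one_sub_div_one_sub_pow hk).mono_left
      (nhdsWithin_mono _ fun q hq => ne_of_lt hq)).pow (p + 1))
  rw [inv_pow, ← div_eq_mul_inv] at h
  refine h.congr' ?_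
  filter_upwards [Ioo_mem_nhdsLT zero_lt_one] with q hq
  have : 1 - q ^ k ≠ 0 := (sub_pos.2 (pow_lt_one₀ hq.1.le hq.2 hk)).ne'
  simp only [Function.comp_apply, div_pow]
  field_simp

theorem pow_le_exp_neg_mul_one_sub {q : ℝ} (hq : 0 ≤ q) (k : ℕ) :
    q ^ k ≤ Real.exp (-(k * (1 - q))) := by
  calc q ^ k ≤ Real.exp (q - 1) ^ k := by gcongr; linarith [Real.add_one_le_exp (q - 1)]
    _ = _ := by rw [← Real.exp_nat_mul]; ring_nf

theorem exp_neg_mul_one_add_pow_le {u : ℝ} (hu : 0 ≤ 1 + u) (n : ℕ) :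
    Real.exp (-u) * (1 + u) ^ n ≤ n ! * Real.exp 1 := by
  have h := Real.pow_div_factorial_le_exp _ hu n
  rw [div_le_iff₀ (by positivity), Real.exp_add] at h
  calc Real.exp (-u) * (1 + u) ^ n ≤ Real.exp (-u) * (Real.exp 1 * Real.exp u * n !) := by gcongr
    _ = n ! * Real.exp 1 := by rw [Real.exp_neg]; field_simp

theorem one_sub_pow_mul_negPolylog_pow_le (p : ℕ) {q : ℝ} (hq0 : 0 ≤ q) (hq1 : q < 1) {k : ℕ}
    (hk : k ≠ 0) :
    (1 - q) ^ (p + 1) * negPolylog p (q ^ k) ≤ p ! * (p + 1)! * Real.exp 1 / (k : ℝ) ^ (p + 1) := by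
  -- with `u = k(1-q)`: `q^k ≤ e^{-u} ≤ 1/(1+u)`, hence `k(1-q) ≤ (1+u)(1-q^k)`
  obtain ⟨u, hu_def⟩ : ∃ u : ℝ, k * (1 - q) = u := ⟨_, rfl⟩
  have hu : 0 ≤ u := hu_def ▸ mul_nonneg k.cast_nonneg (sub_nonneg.2 hq1.le)
  have hx : q ^ k ≤ Real.exp (-u) := hu_def ▸ pow_le_exp_neg_mul_one_sub hq0 k
  have hux : (1 + u) * q ^ k ≤ 1 :=
    calc (1 + u) * q ^ k ≤ Real.exp u * Real.exp (-u) :=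
          mul_le_mul (by linarith [Real.add_one_le_exp u]) hx (by positivity) (by positivity)
      _ = 1 := by rw [← Real.exp_add, add_neg_cancel, Real.exp_zero]
  have hnonneg := negPolylog_nonneg p (pow_nonneg hq0 k)
  rw [le_div_iff₀ (by positivity)]
  calc (1 - q) ^ (p + 1) * negPolylog p (q ^ k) * (k : ℝ) ^ (p + 1)
      = u ^ (p + 1) * negPolylog p (q ^ k) := by rw [← hu_def, mul_pow]; ring
    _ ≤ ((1 + u) * (1 - q ^ k)) ^ (p + 1) * negPolylog p (q ^ k) := by gcongr; linarith
    _ = (1 + u) ^ (p + 1) * ((1 - q ^ k) ^ (p + 1) * negPolylog p (q ^ k)) := by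
        rw [mul_pow]; ring
    _ ≤ (1 + u) ^ (p + 1) * (p ! * Real.exp (-u)) := by
        refine mul_le_mul_of_nonneg_left ?_ (by positivity)
        exact (one_sub_pow_mul_negPolylog_le p (by positivity) (pow_lt_one₀ hq0 hq1 hk)).trans
          (by gcongr)
    _ = p ! * (Real.exp (-u) * (1 + u) ^ (p + 1)) := by ring
    _ ≤ p ! * ((p + 1)! * Real.exp 1) :=
        mul_le_mul_of_nonneg_left (exp_neg_mul_one_add_pow_le (by linarith) _) (by positivity)
    _ = _ := by ring

theorem tendsto_tsum_one_sub_pow_mul_negPolylog {p : ℕ} (hp : p ≠ 0) :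
    Tendsto (fun q => ∑' k : ℕ, (1 - q) ^ (p + 1) * negPolylog p (q ^ (k + 1))) (𝓝[<] 1)
      (𝓝 (∑' k : ℕ, p ! / ((k : ℝ) + 1) ^ (p + 1))) := by
  have hsum : Summable fun k : ℕ => p ! * (p + 1)! * Real.exp 1 / ((k : ℝ) + 1) ^ (p + 1) := by
    have := (summable_nat_add_iff 1).2 (Real.summable_one_div_nat_pow.2 (by omega : 1 < p + 1))
    simpa [div_eq_mul_one_div (_ * _ : ℝ)] using this.mul_left (p ! * (p + 1)! * Real.exp 1)
  refine tendsto_tsum_of_dominated_convergence hsum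
    (fun k => by exact_mod_cast tendsto_one_sub_pow_mul_negPolylog_pow p k.succ_ne_zero) ?_
  filter_upwards [Ioo_mem_nhdsLT zero_lt_one] with q hq k
  rw [Real.norm_of_nonneg (mul_nonneg (pow_nonneg (sub_nonneg.2 hq.2.le) _)
    (negPolylog_nonneg p (pow_nonneg hq.1.le _)))]
  exact_mod_cast one_sub_pow_mul_negPolylog_pow_le p hq.1.le hq.2 k.succ_ne_zero

/-- For `s ≥ 2`, `lim_{q→1⁻} (1-q)^s ζ_q(s) = (s-1)! ζ(s)`, where
`ζ_q(s) = ∑_{m≥1} m^{s-1} q^m/(1-q^m)` and `ζ(s) = ∑_{m≥1} m^{-s}`. -/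
theorem zetaq_limit_q_to_one (s : ℕ) (hs : 2 ≤ s) :
    Filter.Tendsto
      (fun q : ℝ =>
        (1 - q) ^ s * ∑' m : ℕ, ((m : ℝ) + 1) ^ (s - 1) * q ^ (m + 1) / (1 - q ^ (m + 1)))
      (nhdsWithin 1 (Set.Ioo 0 1))
      (nhds (((s - 1).factorial : ℝ) * ∑' m : ℕ, 1 / ((m : ℝ) + 1) ^ s)) := by
  obtain ⟨p, rfl⟩ : ∃ p, s = p + 1 := ⟨s - 1, by omega⟩
  rw [Nat.add_sub_cancel, ← tsum_mul_left]
  simp only [mul_one_div]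
  refine ((tendsto_tsum_one_sub_pow_mul_negPolylog (by omega)).mono_left
    (nhdsWithin_mono _ Ioo_subset_Iio_self)).congr' ?_
  filter_upwards [self_mem_nhdsWithin] with q hq
  rw [tsum_pow_mul_pow_div_one_sub_pow p (by rw [Real.norm_of_nonneg hq.1.le]; exact hq.2),
    tsum_mul_left]
end

section
/- For |q|<1 and integer s≥2, the series Z_s(q) = ∑_{k≥1} q^k/(1-q^k)^s and Z_s(1/q) = ∑_{k≥1} q^{-k}/(1-q^{-k})^s both converge, and Z_s(q) - Z_s(1/q) = (2/(s-1)!) · ∑_{j=3, j odd}^{s} c(s-1,j-1) ζ_q(j), where c(N,j) are the unsigned Stirling numbers of the first kind. -/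
open Finset

private lemma ascPochhammer_eval_prod' (n : ℕ) (z : ℂ) :
    (ascPochhammer ℂ n).eval z = ∏ i ∈ Finset.range n, (z + i) := by
  induction n with
  | zero => simp
  | succ n ih => rw [ascPochhammer_succ_eval, ih, Finset.prod_range_succ]

private lemma aux_val' (x : ℂ) (hx : x ≠ 0) (h1 : (1:ℂ) - x ≠ 0) (t : ℕ) :
    x⁻¹ / (1 - x⁻¹)^(t+1) = (-1:ℂ)^(t+1) * (x^t * (1/(1-x)^(t+1))) := by
  have hy : (1:ℂ) - x⁻¹ = -x⁻¹ * (1 - x) := by field_simp; ring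
  rw [hy, mul_pow, neg_pow, inv_pow, div_eq_iff (by
    apply mul_ne_zero (mul_ne_zero _ _) (pow_ne_zero _ h1)
    · exact pow_ne_zero _ (neg_ne_zero.mpr one_ne_zero)
    · exact inv_ne_zero (pow_ne_zero _ hx))]
  have hsq : (-1:ℂ)^(t+1) * (-1:ℂ)^(t+1) = 1 := by
    rw [← pow_add]; exact Even.neg_one_pow ⟨t+1, rfl⟩
  have hxp : x^t * (x^(t+1))⁻¹ = x⁻¹ := by
    rw [pow_succ, mul_inv, ← mul_assoc, mul_inv_cancel₀ (pow_ne_zero _ hx), one_mul]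
  refine Eq.symm ?_
  calc (-1:ℂ)^(t+1) * (x^t * (1/(1-x)^(t+1))) * ((-1:ℂ)^(t+1) * (x^(t+1))⁻¹ * (1-x)^(t+1))
      = ((-1:ℂ)^(t+1) * (-1:ℂ)^(t+1)) * (x^t * (x^(t+1))⁻¹) *
          ((1/(1-x)^(t+1)) * (1-x)^(t+1)) := by ring
    _ = x⁻¹ := by
        rw [hsq, hxp, one_div, inv_mul_cancel₀ (pow_ne_zero _ h1), one_mul, mul_one]

private lemma lambert_regroup' (q : ℂ) (D : ℕ → ℂ)
    (hGsum : Summable (fun p : ℕ × ℕ => D (p.2+1) * q^((p.1+1)*(p.2+1)))) :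
    HasSum (fun N : ℕ => (∑ d ∈ (N+1).divisors, D d) * q^(N+1))
      (∑' p : ℕ × ℕ, D (p.2+1) * q^((p.1+1)*(p.2+1))) := by
  set G : ℕ × ℕ → ℂ := fun p => D (p.2+1) * q^((p.1+1)*(p.2+1)) with hGdef
  have hfib := hGsum.hasSum.tsum_fiberwise (fun p : ℕ×ℕ => (p.1+1)*(p.2+1))
  set h : ℕ → ℂ := fun N => ∑' (b : ↑((fun p : ℕ×ℕ => (p.1+1)*(p.2+1)) ⁻¹' {N})), G ↑b with hhdef
  have hpos : ∀ N : ℕ, ∀ p ∈ (N+1).divisorsAntidiagonal, 1 ≤ p.1 ∧ 1 ≤ p.2 := by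
    intro N p hp
    rw [Nat.mem_divisorsAntidiagonal] at hp
    constructor
    · rcases Nat.eq_zero_or_pos p.1 with h|h
      · exfalso; rw [h] at hp; simp at hp
      · exact h
    · rcases Nat.eq_zero_or_pos p.2 with h|h
      · exfalso; rw [h] at hp; simp at hp
      · exact h
  have hset0 : ((fun p : ℕ×ℕ => (p.1+1)*(p.2+1)) ⁻¹' {0}) = ∅ := by
    ext ⟨a,b⟩; simp
  have hsetS : ∀ N : ℕ, ((fun p : ℕ×ℕ => (p.1+1)*(p.2+1)) ⁻¹' {N+1})
      = ↑(((N+1).divisorsAntidiagonal).image (fun p : ℕ×ℕ => (p.1 - 1, p.2 - 1))) := by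
    intro N
    ext ⟨a,b⟩
    simp only [Set.mem_preimage, Set.mem_singleton_iff, Finset.coe_image, Set.mem_image,
      Finset.mem_coe, Nat.mem_divisorsAntidiagonal, Prod.exists]
    constructor
    · intro hab
      exact ⟨a+1, b+1, ⟨hab, Nat.succ_ne_zero N⟩, by simp⟩
    · rintro ⟨u, v, ⟨huv, -⟩, heq⟩
      have hu : 1 ≤ u := by
        rcases Nat.eq_zero_or_pos u with h|h
        · exfalso; rw [h] at huv; simp at huv
        · exact h
      have hv : 1 ≤ v := by
        rcases Nat.eq_zero_or_pos v with h|h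
        · exfalso; rw [h, mul_zero] at huv; exact (Nat.succ_ne_zero N) huv.symm
        · exact h
      have ha : u = a + 1 := by
        have := congrArg Prod.fst heq; simp at this; omega
      have hb : v = b + 1 := by
        have := congrArg Prod.snd heq; simp at this; omega
      rw [← ha, ← hb]; exact huv
  have h0 : h 0 = 0 := by
    haveI : IsEmpty ↑((fun p : ℕ×ℕ => (p.1+1)*(p.2+1)) ⁻¹' {(0:ℕ)}) :=
      Set.isEmpty_coe_sort.mpr hset0
    exact tsum_empty
  have hsucc : ∀ N : ℕ, h (N+1) = (∑ d ∈ (N+1).divisors, D d) * q^(N+1) := by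
    intro N
    simp only [hhdef]
    rw [hsetS N]
    rw [Finset.tsum_subtype' (((N+1).divisorsAntidiagonal).image
      (fun p : ℕ×ℕ => (p.1 - 1, p.2 - 1))) G]
    rw [Finset.sum_image (fun p hp r hr hpr => ?inj)]
    case inj =>
      have h1 := hpos N p hp
      have h2 := hpos N r hr
      have e1 := congrArg Prod.fst hpr
      have e2 := congrArg Prod.snd hpr
      simp only at e1 e2
      exact Prod.ext (by omega) (by omega)
    have hterm : ∀ p ∈ (N+1).divisorsAntidiagonal,
        G (p.1 - 1, p.2 - 1) = D p.2 * q^(N+1) := by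
      intro p hp
      have h1 := hpos N p hp
      have h2 := (Nat.mem_divisorsAntidiagonal.mp hp).1
      rw [hGdef]
      simp only
      rw [show p.2 - 1 + 1 = p.2 by omega, show p.1 - 1 + 1 = p.1 by omega, h2]
    rw [Finset.sum_congr rfl hterm,
      Nat.sum_divisorsAntidiagonal' (f := fun _ b => D b * q^(N+1)), ← Finset.sum_mul]
  have hEsum : HasSum (fun n : ℕ => h (n+1)) (∑' p : ℕ × ℕ, G p) := by
    refine (hasSum_nat_add_iff 1).mpr ?_
    simpa [h0] using hfib
  exact (funext hsucc : (fun n : ℕ => h (n+1)) = _) ▸ hEsum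

/-- For `0 < |q| < 1` and `s ≥ 2`, the series `Z_s(q) = ∑_{k≥1} q^k/(1-q^k)^s` and
`Z_s(1/q) = ∑_{k≥1} q^{-k}/(1-q^{-k})^s` both converge, and
`Z_s(q) - Z_s(1/q) = (2/(s-1)!) ∑_{j=3, j odd}^s c(s-1,j-1) ζ_q(j)`,
where `c(N,j)` are the unsigned Stirling numbers of the first kind, defined by
`ℓ(ℓ+1)⋯(ℓ+N-1) = ∑_{j=1}^N c(N,j) ℓ^j`. -/
theorem Zs_sub_Zs_inv (q : ℂ) (hq0 : q ≠ 0) (hq : ‖q‖ < 1) (s : ℕ) (hs : 2 ≤ s)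
    (c : ℕ → ℕ → ℂ)
    (hc : ∀ N : ℕ, 1 ≤ N → ∀ ℓ : ℕ,
      (∏ i ∈ Finset.range N, ((ℓ : ℂ) + i)) = ∑ j ∈ Finset.Icc 1 N, c N j * (ℓ : ℂ) ^ j) :
    Summable (fun k : ℕ => q ^ (k + 1) / (1 - q ^ (k + 1)) ^ s) ∧
    Summable (fun k : ℕ => q⁻¹ ^ (k + 1) / (1 - q⁻¹ ^ (k + 1)) ^ s) ∧
    (∑' k : ℕ, q ^ (k + 1) / (1 - q ^ (k + 1)) ^ s) -
        (∑' k : ℕ, q⁻¹ ^ (k + 1) / (1 - q⁻¹ ^ (k + 1)) ^ s) =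
      (2 / ((s - 1).factorial : ℂ)) *
        ∑ j ∈ (Finset.Icc 3 s).filter (fun j => Odd j),
          c (s - 1) (j - 1) *
            ∑' k : ℕ, (∑ d ∈ (k + 1).divisors, (d : ℂ) ^ (j - 1)) * q ^ (k + 1) := by
  obtain ⟨t, rfl⟩ : ∃ t, s = t + 1 := ⟨s - 1, by omega⟩
  have ht1 : 1 ≤ t := by omega
  simp only [Nat.add_sub_cancel]
  set K : ℂ := (t.factorial : ℂ) with hK
  have hK0 : K ≠ 0 := Nat.cast_ne_zero.mpr t.factorial_ne_zero
  ---- PART I : algebraic identity for the coefficients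
  have key : ∀ z : ℂ, (ascPochhammer ℂ t).eval z = ∑ j ∈ Icc 1 t, c t j * z ^ j := by
    have h0 : (ascPochhammer ℂ t - ∑ j ∈ Icc 1 t, Polynomial.C (c t j) * Polynomial.X ^ j) = 0 := by
      apply Polynomial.eq_zero_of_infinite_isRoot
      refine ((Set.infinite_range_of_injective (f := ((↑·) : ℕ → ℂ)) Nat.cast_injective).mono ?_)
      rintro z ⟨n, rfl⟩
      simp only [Set.mem_setOf_eq, Polynomial.IsRoot, Polynomial.eval_sub,
        Polynomial.eval_finset_sum, Polynomial.eval_mul, Polynomial.eval_C,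
        Polynomial.eval_pow, Polynomial.eval_X, sub_eq_zero]
      rw [ascPochhammer_eval_prod', hc t ht1 n]
    intro z
    have := congrArg (Polynomial.eval z) h0
    simpa [Polynomial.eval_finset_sum, sub_eq_zero] using this
  have hA : ∀ n : ℕ, K * (((n + t).choose t : ℕ) : ℂ) = ∑ j ∈ Icc 1 t, c t j * ((n : ℂ) + 1) ^ j := by
    intro n
    have h1 : (((n + 1).ascFactorial t : ℕ) : ℂ) = K * ((n + t).choose t : ℕ) := by
      rw [Nat.ascFactorial_eq_factorial_mul_choose]; push_cast; ring
    rw [← h1, Nat.cast_ascFactorial, key]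
    push_cast; ring_nf
  have hB : ∀ n : ℕ, K * (((n + 1).choose t : ℕ) : ℂ)
      = (-1) ^ t * ∑ j ∈ Icc 1 t, c t j * (-1 : ℂ) ^ j * ((n : ℂ) + 1) ^ j := by
    intro n
    have h1 : (((n + 1).descFactorial t : ℕ) : ℂ) = K * ((n + 1).choose t : ℕ) := by
      rw [Nat.descFactorial_eq_factorial_mul_choose]; push_cast; ring
    have h2 := ascPochhammer_eval_neg_eq_descPochhammer ℂ ((n : ℂ) + 1) t
    have h3 : Polynomial.eval ((n:ℂ)+1) (descPochhammer ℂ t)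
        = (-1)^t * Polynomial.eval (-((n:ℂ)+1)) (ascPochhammer ℂ t) := by
      rw [h2, ← mul_assoc, ← pow_add, ← two_mul, pow_mul]
      norm_num
    rw [← h1, ← descPochhammer_eval_eq_descFactorial]
    push_cast
    rw [h3, key]
    congr 1
    refine Finset.sum_congr rfl fun j _ => ?_
    rw [neg_pow]; ring
  have hD : ∀ n : ℕ, (((n + t).choose t : ℕ) : ℂ) - (-1 : ℂ) ^ (t + 1) * (((n + 1).choose t : ℕ) : ℂ)
      = (2 / K) * ∑ j ∈ (Icc 3 (t + 1)).filter (fun j => Odd j), c t (j - 1) * ((n : ℂ) + 1) ^ (j - 1) := by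
    intro n
    have h4 : (-1 : ℂ) ^ (t + 1) * ((-1 : ℂ) ^ t) = -1 := by
      rw [← pow_add, show t + 1 + t = 2 * t + 1 by ring, pow_succ, pow_mul]; norm_num
    have e1 : (((n + t).choose t : ℕ) : ℂ) - (-1 : ℂ) ^ (t + 1) * (((n + 1).choose t : ℕ) : ℂ)
        = K⁻¹ * (∑ j ∈ Icc 1 t, c t j * (1 + (-1 : ℂ) ^ j) * ((n : ℂ) + 1) ^ j) := by
      rw [eq_inv_mul_iff_mul_eq₀ hK0]
      calc K * ((((n + t).choose t : ℕ) : ℂ) - (-1 : ℂ) ^ (t + 1) * (((n + 1).choose t : ℕ) : ℂ))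
          = K * (((n + t).choose t : ℕ) : ℂ)
            - (-1 : ℂ) ^ (t + 1) * (K * (((n + 1).choose t : ℕ) : ℂ)) := by ring
        _ = (∑ j ∈ Icc 1 t, c t j * ((n : ℂ) + 1) ^ j)
            - (-1 : ℂ) ^ (t + 1) * ((-1 : ℂ) ^ t * ∑ j ∈ Icc 1 t, c t j * (-1 : ℂ) ^ j * ((n : ℂ) + 1) ^ j) := by
            rw [hA n, hB n]
        _ = (∑ j ∈ Icc 1 t, c t j * ((n : ℂ) + 1) ^ j)
            + ∑ j ∈ Icc 1 t, c t j * (-1 : ℂ) ^ j * ((n : ℂ) + 1) ^ j := by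
            rw [← mul_assoc, h4]; ring
        _ = ∑ j ∈ Icc 1 t, c t j * (1 + (-1 : ℂ) ^ j) * ((n : ℂ) + 1) ^ j := by
            rw [← Finset.sum_add_distrib]
            exact Finset.sum_congr rfl fun j _ => by ring
    rw [e1]
    have e2 : ∑ j ∈ Icc 1 t, c t j * (1 + (-1 : ℂ) ^ j) * ((n : ℂ) + 1) ^ j
        = 2 * ∑ j ∈ (Icc 3 (t + 1)).filter (fun j => Odd j), c t (j - 1) * ((n : ℂ) + 1) ^ (j - 1) := by
      rw [← Finset.sum_filter_add_sum_filter_not (Icc 1 t) (fun j => Even j)]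
      have hodd : ∑ j ∈ (Icc 1 t).filter (fun j => ¬ Even j),
          c t j * (1 + (-1 : ℂ) ^ j) * ((n : ℂ) + 1) ^ j = 0 := by
        apply Finset.sum_eq_zero
        intro j hj
        simp only [Finset.mem_filter, Nat.not_even_iff_odd] at hj
        rw [hj.2.neg_one_pow]; ring
      rw [hodd, add_zero, Finset.mul_sum]
      refine Finset.sum_nbij' (fun j => j + 1) (fun j => j - 1) ?_ ?_ ?_ ?_ ?_
      · intro a ha
        simp only [Finset.mem_filter, Finset.mem_Icc] at ha ⊢
        obtain ⟨⟨h1, h2⟩, h3⟩ := ha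
        refine ⟨⟨?_, by omega⟩, h3.add_one⟩
        rcases h3 with ⟨m, rfl⟩; omega
      · intro a ha
        simp only [Finset.mem_filter, Finset.mem_Icc] at ha ⊢
        obtain ⟨⟨h1, h2⟩, h3⟩ := ha
        refine ⟨⟨by omega, by omega⟩, ?_⟩
        rcases h3 with ⟨m, rfl⟩
        exact ⟨m, by omega⟩
      · intro a _; show a + 1 - 1 = a; omega
      · intro a ha
        simp only [Finset.mem_filter, Finset.mem_Icc] at ha
        show a - 1 + 1 = a; omega
      · intro a ha
        simp only [Finset.mem_filter, Finset.mem_Icc] at ha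
        rw [Nat.add_sub_cancel, ha.2.neg_one_pow]
        ring
    rw [e2, ← mul_assoc]
    congr 1
    field_simp
  ---- PART II : analytic setup
  have hr1 : ‖q‖ < 1 := hq
  have hr0 : (0:ℝ) ≤ ‖q‖ := norm_nonneg q
  have hxlt : ∀ k : ℕ, ‖q ^ (k+1)‖ < 1 := fun k => by
    rw [norm_pow]; exact pow_lt_one₀ hr0 hr1 k.succ_ne_zero
  have hx0 : ∀ k : ℕ, q ^ (k+1) ≠ 0 := fun k => pow_ne_zero _ hq0
  have h1x : ∀ k : ℕ, (1:ℂ) - q ^ (k+1) ≠ 0 := fun k =>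
    sub_ne_zero.mpr (fun h => by have hk := hxlt k; rw [← h] at hk; simp at hk)
  have HS1 : ∀ k : ℕ, HasSum (fun n : ℕ => ((n + t).choose t : ℂ) * q ^ ((k+1) * (n+1)))
      (q^(k+1) / (1 - q^(k+1))^(t+1)) := by
    intro k
    have h := (hasSum_choose_mul_geometric_of_norm_lt_one t (hxlt k)).mul_left (q^(k+1))
    convert h using 1
    · rfl
    · funext n
      rw [pow_mul, pow_succ']
      ring
    · rw [mul_one_div]
  have HS2 : ∀ k : ℕ, HasSum
      (fun n : ℕ => ((-1:ℂ)^(t+1) * ((n + 1).choose t : ℂ)) * q ^ ((k+1) * (n+1)))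
      (q⁻¹^(k+1) / (1 - q⁻¹^(k+1))^(t+1)) := by
    intro k
    set x := q ^ (k+1) with hxdef
    have base := (hasSum_choose_mul_geometric_of_norm_lt_one t (hxlt k)).mul_left (x^t)
    have hinj : Function.Injective (fun n : ℕ => n + (t-1)) := fun a b h => by
      simpa using h
    have hcomp : ((fun m : ℕ => ((m + 1).choose t : ℂ) * x^(m+1)) ∘ (fun n => n + (t-1)))
        = fun n => x^t * (((n + t).choose t : ℂ) * x^n) := by
      funext n
      simp only [Function.comp_apply]
      have h1 : n + (t-1) + 1 = n + t := by omega
      rw [h1, pow_add]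
      ring
    have hside : ∀ m ∉ Set.range (fun n : ℕ => n + (t-1)),
        ((m + 1).choose t : ℂ) * x^(m+1) = 0 := by
      intro m hm
      have hmlt : m + 1 < t := by
        rcases lt_or_ge (m+1) t with h|h
        · exact h
        · exact absurd ⟨m - (t-1), show m - (t-1) + (t-1) = m by omega⟩ hm
      rw [Nat.choose_eq_zero_of_lt hmlt]; simp
    have hF : HasSum (fun m : ℕ => ((m + 1).choose t : ℂ) * x^(m+1))
        (x^t * (1/(1-x)^(t+1))) :=
      (hinj.hasSum_iff hside).mp (hcomp ▸ base)
    have h2 := hF.mul_left ((-1:ℂ)^(t+1))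
    have hval : q⁻¹^(k+1) / (1 - q⁻¹^(k+1))^(t+1) = (-1:ℂ)^(t+1) * (x^t * (1/(1-x)^(t+1))) := by
      rw [inv_pow, ← hxdef]
      exact aux_val' x (hx0 k) (h1x k) t
    rw [hval]
    convert h2 using 1
    rfl
    funext m
    rw [pow_mul, ← hxdef]
    ring
  ---- PART III : summability of the double series
  have hgeo : Summable (fun k : ℕ => ‖q‖ ^ k) := summable_geometric_of_lt_one hr0 hr1
  have hpoly : ∀ j : ℕ, Summable (fun n : ℕ => ((n:ℝ))^j * ‖q‖^n) := fun j => by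
    simpa using summable_pow_mul_geometric_of_norm_lt_one (R := ℝ) j
      (by rw [Real.norm_eq_abs]; rwa [_root_.abs_of_nonneg (norm_nonneg q)])
  have hshift : ∀ j : ℕ, Summable (fun n : ℕ => ((n:ℝ)+1)^j * ‖q‖^(n+1)) := fun j => by
    have := (summable_nat_add_iff (f := fun n : ℕ => ((n:ℝ))^j * ‖q‖^n) 1).mpr (hpoly j)
    simpa using this
  have hqb : ∀ k n : ℕ, ‖q‖^((k+1)*(n+1)) ≤ ‖q‖^k * ‖q‖^(n+1) := by
    intro k n
    rw [← pow_add]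
    exact pow_le_pow_of_le_one hr0 hr1.le (by nlinarith)
  have hcoef : ∀ m n : ℕ, m ≤ (t+1)*(n+1) → ((m.choose t : ℕ):ℝ) ≤ ((t:ℝ)+1)^t * ((n:ℝ)+1)^t := by
    intro m n hm
    calc ((m.choose t : ℕ):ℝ) ≤ ((m^t : ℕ):ℝ) := by exact_mod_cast Nat.choose_le_pow m t
      _ ≤ (((t+1)*(n+1))^t : ℕ) := by exact_mod_cast Nat.pow_le_pow_left hm t
      _ = ((t:ℝ)+1)^t * ((n:ℝ)+1)^t := by push_cast; rw [mul_pow]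
  have hU : Summable (fun n : ℕ => ((t:ℝ)+1)^t * (((n:ℝ)+1)^t * ‖q‖^(n+1))) :=
    (hshift t).mul_left _
  have hProd : Summable (fun p : ℕ × ℕ => ‖q‖^p.1 * (((t:ℝ)+1)^t * (((p.2:ℝ)+1)^t * ‖q‖^(p.2+1)))) :=
    hgeo.mul_of_nonneg hU (fun k => by positivity) (fun n => by positivity)
  have hbound : ∀ (m : ℕ) (p : ℕ × ℕ), m ≤ (t+1)*(p.2+1) →
      ((m.choose t : ℕ):ℝ) * ‖q‖^((p.1+1)*(p.2+1))
        ≤ ‖q‖^p.1 * (((t:ℝ)+1)^t * (((p.2:ℝ)+1)^t * ‖q‖^(p.2+1))) := by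
    rintro m ⟨k, n⟩ hm
    calc ((m.choose t : ℕ):ℝ) * ‖q‖^((k+1)*(n+1))
        ≤ (((t:ℝ)+1)^t * ((n:ℝ)+1)^t) * (‖q‖^k * ‖q‖^(n+1)) := by
          apply mul_le_mul (hcoef m n hm) (hqb k n) (by positivity) (by positivity)
      _ = ‖q‖^k * (((t:ℝ)+1)^t * (((n:ℝ)+1)^t * ‖q‖^(n+1))) := by ring
  have hG1sum : Summable (fun p : ℕ × ℕ => ((p.2 + t).choose t : ℂ) * q ^ ((p.1+1) * (p.2+1))) := by
    apply Summable.of_norm_bounded hProd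
    rintro ⟨k, n⟩
    simp only [norm_mul, norm_pow, Complex.norm_natCast]
    exact hbound (n + t) (k, n) (by nlinarith)
  have hG2sum : Summable (fun p : ℕ × ℕ =>
      ((-1:ℂ)^(t+1) * ((p.2 + 1).choose t : ℂ)) * q ^ ((p.1+1) * (p.2+1))) := by
    apply Summable.of_norm_bounded hProd
    rintro ⟨k, n⟩
    simp only [norm_mul, norm_pow, Complex.norm_natCast, norm_neg, norm_one, one_pow, one_mul]
    exact hbound (n + 1) (k, n) (by nlinarith)
  ---- PART IV : the two one-variable series
  have HSf1 : HasSum (fun k : ℕ => q^(k+1) / (1 - q^(k+1))^(t+1))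
      (∑' p : ℕ × ℕ, ((p.2 + t).choose t : ℂ) * q ^ ((p.1+1) * (p.2+1))) :=
    hG1sum.hasSum.prod_fiberwise (fun k => HS1 k)
  have HSf2 : HasSum (fun k : ℕ => q⁻¹^(k+1) / (1 - q⁻¹^(k+1))^(t+1))
      (∑' p : ℕ × ℕ, ((-1:ℂ)^(t+1) * ((p.2 + 1).choose t : ℂ)) * q ^ ((p.1+1) * (p.2+1))) :=
    hG2sum.hasSum.prod_fiberwise (fun k => HS2 k)
  refine ⟨HSf1.summable, HSf2.summable, ?_⟩
  ---- PART V : regrouping by divisors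
  set D : ℕ → ℂ := fun d => ((d - 1 + t).choose t : ℂ) - (-1:ℂ)^(t+1) * ((d.choose t : ℕ) : ℂ)
    with hDdef
  have hGeq : (fun p : ℕ × ℕ => D (p.2+1) * q^((p.1+1)*(p.2+1)))
      = fun p : ℕ × ℕ => (((p.2 + t).choose t : ℂ) * q ^ ((p.1+1) * (p.2+1)))
        - (((-1:ℂ)^(t+1) * ((p.2 + 1).choose t : ℂ)) * q ^ ((p.1+1) * (p.2+1))) := by
    funext p
    rw [hDdef]
    simp only [Nat.add_sub_cancel]
    ring
  have hGsum : Summable (fun p : ℕ × ℕ => D (p.2+1) * q^((p.1+1)*(p.2+1))) := by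
    rw [hGeq]; exact hG1sum.sub hG2sum
  have hlam := lambert_regroup' q D hGsum
  have htsub : (∑' p : ℕ × ℕ, D (p.2+1) * q^((p.1+1)*(p.2+1)))
      = (∑' p : ℕ × ℕ, ((p.2 + t).choose t : ℂ) * q ^ ((p.1+1) * (p.2+1)))
        - (∑' p : ℕ × ℕ, ((-1:ℂ)^(t+1) * ((p.2 + 1).choose t : ℂ)) * q ^ ((p.1+1) * (p.2+1))) := by
    rw [hGeq]
    exact (hG1sum.hasSum.sub hG2sum.hasSum).tsum_eq
  rw [HSf1.tsum_eq, HSf2.tsum_eq, ← htsub]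
  ---- PART VI : final computation
  set F := (Icc 3 (t + 1)).filter (fun j => Odd j) with hF
  have hDd : ∀ d : ℕ, 1 ≤ d → D d = (2 / K) * ∑ j ∈ F, c t (j - 1) * ((d : ℂ)) ^ (j - 1) := by
    intro d hd
    have := hD (d - 1)
    rw [show d - 1 + t = d - 1 + t from rfl, show d - 1 + 1 = d by omega] at this
    rw [hDdef]
    simp only
    rw [this]
    congr 1
    refine Finset.sum_congr rfl fun j _ => ?_
    congr 2
    push_cast [show (1:ℕ) ≤ d from hd]
    ring
  have hNform : ∀ N : ℕ, (∑ d ∈ (N+1).divisors, D d) * q^(N+1)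
      = ∑ j ∈ F, ((2/K) * c t (j-1)) *
          ((∑ d ∈ (N+1).divisors, (d:ℂ)^(j-1)) * q^(N+1)) := by
    intro N
    have h1 : ∑ d ∈ (N+1).divisors, D d
        = ∑ d ∈ (N+1).divisors, ((2/K) * ∑ j ∈ F, c t (j-1) * ((d : ℂ)) ^ (j-1)) := by
      refine Finset.sum_congr rfl fun d hd => hDd d ?_
      exact Nat.pos_of_mem_divisors hd
    rw [h1, ← Finset.mul_sum, Finset.sum_comm, Finset.mul_sum, Finset.sum_mul]
    refine Finset.sum_congr rfl fun j hj => ?_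
    rw [← Finset.mul_sum]
    ring
  have hlam2 : HasSum (fun N : ℕ => ∑ j ∈ F, ((2/K) * c t (j-1)) *
      ((∑ d ∈ (N+1).divisors, (d:ℂ)^(j-1)) * q^(N+1)))
      (∑' p : ℕ × ℕ, D (p.2+1) * q^((p.1+1)*(p.2+1))) := by
    exact hlam.congr_fun fun N => (hNform N).symm
  -- summability of each j-term
  have hW : ∀ j : ℕ, j ∈ F → Summable (fun N : ℕ =>
      ((2/K) * c t (j-1)) * ((∑ d ∈ (N+1).divisors, (d:ℂ)^(j-1)) * q^(N+1))) := by
    intro j hj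
    have hj3 : 3 ≤ j := (Finset.mem_Icc.mp (Finset.mem_filter.mp hj).1).1
    apply Summable.mul_left
    apply Summable.of_norm_bounded (hshift j)
    intro N
    rw [norm_mul, norm_pow]
    have hσ : ‖∑ d ∈ (N+1).divisors, (d:ℂ)^(j-1)‖ ≤ ((N:ℝ)+1)^j := by
      calc ‖∑ d ∈ (N+1).divisors, (d:ℂ)^(j-1)‖
          ≤ ∑ d ∈ (N+1).divisors, ‖(d:ℂ)^(j-1)‖ := norm_sum_le _ _
        _ = ∑ d ∈ (N+1).divisors, ((d:ℝ))^(j-1) := by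
            refine Finset.sum_congr rfl fun d _ => ?_
            rw [norm_pow, Complex.norm_natCast]
        _ ≤ ∑ d ∈ (N+1).divisors, ((N:ℝ)+1)^(j-1) := by
            refine Finset.sum_le_sum fun d hd => ?_
            have hdle : d ≤ N + 1 := Nat.divisor_le hd
            have hdr : ((d:ℝ)) ≤ ((N:ℝ)+1) := by exact_mod_cast hdle
            exact pow_le_pow_left₀ (by positivity) hdr _
        _ = ((N+1).divisors.card : ℝ) * ((N:ℝ)+1)^(j-1) := by
            rw [Finset.sum_const, nsmul_eq_mul]
        _ ≤ ((N:ℝ)+1) * ((N:ℝ)+1)^(j-1) := by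
            have hsub : (N+1).divisors ⊆ Finset.Icc 1 (N+1) := by
              intro d hd
              rw [Finset.mem_Icc]
              exact ⟨Nat.pos_of_mem_divisors hd, Nat.divisor_le hd⟩
            have hcard : (N+1).divisors.card ≤ N + 1 := by
              have := Finset.card_le_card hsub
              rwa [Nat.card_Icc, Nat.add_sub_cancel] at this
            apply mul_le_mul_of_nonneg_right _ (by positivity)
            exact_mod_cast hcard
        _ = ((N:ℝ)+1)^j := by
            rw [← pow_succ']
            congr 1
            omega
    exact mul_le_mul_of_nonneg_right hσ (by positivity)
  -- put it all together
  rw [← hlam2.tsum_eq, Summable.tsum_finsetSum hW, Finset.mul_sum]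
  refine Finset.sum_congr rfl fun j hj => ?_
  rw [tsum_mul_left]
  ring
end

section
/- For |q|<1 and integer s≥2, Z_s(q) + Z_s(1/q) = (2/(s-1)!) · ∑_{j=2, j even}^{s} c(s-1,j-1) ζ_q(j). -/
open Finset Nat


lemma polyExt (N : ℕ) (c : ℕ → ℕ → ℂ)
    (hc : ∀ ℓ : ℕ, (∏ i ∈ range N, ((ℓ : ℂ) + i)) = ∑ j ∈ Icc 1 N, c N j * (ℓ : ℂ) ^ j)
    (z : ℂ) : (∏ i ∈ range N, (z + i)) = ∑ j ∈ Icc 1 N, c N j * z ^ j := by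
  set P : Polynomial ℂ :=
    (∏ i ∈ range N, (Polynomial.X + Polynomial.C (i : ℂ)))
      - ∑ j ∈ Icc 1 N, Polynomial.C (c N j) * Polynomial.X ^ j with hP
  have hev : ∀ w : ℂ, P.eval w
      = (∏ i ∈ range N, (w + i)) - ∑ j ∈ Icc 1 N, c N j * w ^ j := by
    intro w
    simp [hP, Polynomial.eval_prod, Polynomial.eval_finset_sum]
  have hzero : P = 0 := by
    apply Polynomial.eq_zero_of_infinite_isRoot
    apply Set.Infinite.mono (s := Set.range (Nat.cast : ℕ → ℂ))
    · rintro x ⟨ℓ, rfl⟩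
      simp only [Set.mem_setOf_eq, Polynomial.IsRoot, hev, hc ℓ, sub_self]
    · exact Set.infinite_range_of_injective Nat.cast_injective
  have h := hev z
  rw [hzero] at h
  simp only [Polynomial.eval_zero] at h
  exact sub_eq_zero.mp h.symm


lemma prodB (N n : ℕ) : (∏ i ∈ range N, (n + 1 + i)) = N ! * (n + N).choose N := by
  have h1 : (∏ i ∈ range N, (n + 1 + i)) = ∏ i ∈ range N, (n + N - i) := by
    rw [← Finset.prod_range_reflect]
    apply Finset.prod_congr rfl
    intro i hi
    have : i < N := Finset.mem_range.mp hi
    omega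
  rw [h1, ← Nat.descFactorial_eq_prod_range, Nat.descFactorial_eq_factorial_mul_choose]

lemma prodC (N n : ℕ) :
    ((N ! : ℂ)) * ((n + 1).choose N : ℂ) = ∏ i ∈ range N, (((n : ℂ) + 1) - i) := by
  rcases le_or_gt N (n + 1) with h | h
  · have h1 : (∏ i ∈ range N, (((n : ℂ) + 1) - i)) = ((∏ i ∈ range N, (n + 1 - i) : ℕ) : ℂ) := by
      push_cast
      apply Finset.prod_congr rfl
      intro i hi
      have hi' : i < N := Finset.mem_range.mp hi
      have : i ≤ n + 1 := by omega
      push_cast [Nat.cast_sub this]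
      ring
    rw [h1, ← Nat.descFactorial_eq_prod_range, Nat.descFactorial_eq_factorial_mul_choose]
    push_cast
    ring
  · rw [Nat.choose_eq_zero_of_lt h]
    rw [Finset.prod_eq_zero (Finset.mem_range.mpr (show n + 1 < N from h))]
    · ring
    · push_cast; ring

lemma coeffD (N : ℕ) (c : ℕ → ℕ → ℂ)
    (hc : ∀ z : ℂ, (∏ i ∈ range N, (z + i)) = ∑ j ∈ Icc 1 N, c N j * z ^ j) (n : ℕ) :
    ((n + N).choose N : ℂ) + (-1) ^ (N + 1) * (((n + 1).choose N : ℕ) : ℂ)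
      = (2 / (N ! : ℂ)) * ∑ j ∈ (Icc 1 N).filter (fun j => Odd j), c N j * ((n : ℂ) + 1) ^ j := by
  have hfac : (N ! : ℂ) ≠ 0 := Nat.cast_ne_zero.mpr (Nat.factorial_ne_zero N)
  set x : ℂ := (n : ℂ) + 1 with hx
  have E1 : (N ! : ℂ) * (((n + N).choose N : ℕ) : ℂ) = ∏ i ∈ range N, (x + i) := by
    have := congrArg (Nat.cast : ℕ → ℂ) (prodB N n)
    push_cast at this
    rw [← this]
  have E2 : (N ! : ℂ) * (((n + 1).choose N : ℕ) : ℂ) = (-1) ^ N * ∏ i ∈ range N, (-x + i) := by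
    rw [prodC N n]
    rw [show (∏ i ∈ range N, (x - i)) = ∏ i ∈ range N, (-1) * (-x + i) by
      apply Finset.prod_congr rfl; intro i _; ring]
    rw [Finset.prod_mul_distrib, Finset.prod_const, Finset.card_range]
  have key : (N ! : ℂ) * ((((n + N).choose N : ℕ) : ℂ) + (-1) ^ (N + 1) * (((n + 1).choose N : ℕ) : ℂ))
      = 2 * ∑ j ∈ (Icc 1 N).filter (fun j => Odd j), c N j * x ^ j := by
    have h2 : (∑ j ∈ Icc 1 N, c N j * x ^ j) - ∑ j ∈ Icc 1 N, c N j * (-x) ^ j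
        = 2 * ∑ j ∈ (Icc 1 N).filter (fun j => Odd j), c N j * x ^ j := by
      rw [Finset.mul_sum, Finset.sum_filter, ← Finset.sum_sub_distrib]
      apply Finset.sum_congr rfl
      intro j _
      rcases Nat.even_or_odd j with hj | hj
      · simp [Nat.not_odd_iff_even.mpr hj, hj.neg_pow]
      · simp [hj, hj.neg_pow]
        ring
    calc (N ! : ℂ) * ((((n + N).choose N : ℕ) : ℂ) + (-1) ^ (N + 1) * (((n + 1).choose N : ℕ) : ℂ))
        = (N ! : ℂ) * (((n + N).choose N : ℕ) : ℂ)
          + (-1) ^ (N + 1) * ((N ! : ℂ) * (((n + 1).choose N : ℕ) : ℂ)) := by ring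
      _ = (∏ i ∈ range N, (x + i)) + (-1) ^ (N + 1) * ((-1) ^ N * ∏ i ∈ range N, (-x + i)) := by
          rw [E1, E2]
      _ = (∏ i ∈ range N, (x + i)) - ∏ i ∈ range N, (-x + i) := by
          rw [show ((-1 : ℂ)) ^ (N + 1) * ((-1) ^ N * ∏ i ∈ range N, (-x + i))
            = ((-1) * (-1) ^ (N + N)) * ∏ i ∈ range N, (-x + i) by ring_nf, ]
          rw [show N + N = 2 * N by ring, pow_mul]
          norm_num
          ring
      _ = (∑ j ∈ Icc 1 N, c N j * x ^ j) - ∑ j ∈ Icc 1 N, c N j * (-x) ^ j := by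
          rw [hc x, hc (-x)]
      _ = _ := h2
  field_simp
  linear_combination key


lemma masterSummable (q : ℂ) (hq : ‖q‖ < 1) (A : ℝ) (t : ℕ) (w : ℕ → ℂ)
    (hw : ∀ n : ℕ, ‖w n‖ ≤ A * ((n : ℝ) + 1) ^ t) :
    Summable (fun p : ℕ × ℕ ↦ w p.2 * q ^ ((p.1 + 1) * (p.2 + 1))) := by
  set x : ℝ := ‖q‖ with hxdef
  have hx0 : 0 ≤ x := norm_nonneg q
  have hx1 : x < 1 := hq
  apply Summable.of_norm
  have hgeo : Summable (fun k : ℕ ↦ x ^ k) := summable_geometric_of_lt_one hx0 hx1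
  have hpow : Summable (fun n : ℕ ↦ (n : ℝ) ^ t * x ^ n) := by
    have : ‖x‖ < 1 := by rwa [Real.norm_eq_abs, abs_of_nonneg hx0]
    exact summable_pow_mul_geometric_of_norm_lt_one t this
  have hshift : Summable (fun n : ℕ ↦ A * (((n : ℝ) + 1) ^ t * x ^ (n + 1))) := by
    have h1 : Summable ((fun n : ℕ ↦ (n : ℝ) ^ t * x ^ n) ∘ (fun n : ℕ ↦ n + 1)) :=
      hpow.comp_injective (add_left_injective 1)
    have h2 : Summable (fun n : ℕ ↦ ((n : ℝ) + 1) ^ t * x ^ (n + 1)) := by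
      refine h1.congr fun n ↦ ?_
      simp [Function.comp]
    exact h2.mul_left A
  have hprod : Summable (fun p : ℕ × ℕ ↦ x ^ p.1 * (A * (((p.2 : ℝ) + 1) ^ t * x ^ (p.2 + 1)))) := by
    apply hgeo.mul_of_nonneg hshift
    · intro k; positivity
    · intro n
      have hA : 0 ≤ A := le_trans (norm_nonneg (w 0)) (by simpa using hw 0)
      positivity
  apply Summable.of_nonneg_of_le (fun p ↦ norm_nonneg _) _ hprod
  rintro ⟨k, n⟩
  have hb : ‖w n * q ^ ((k + 1) * (n + 1))‖
      = ‖w n‖ * x ^ ((k + 1) * (n + 1)) := by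
    rw [norm_mul, norm_pow]
  rw [hb]
  have hxe : x ^ ((k + 1) * (n + 1)) ≤ x ^ (k + (n + 1)) := by
    apply pow_le_pow_of_le_one hx0 hx1.le
    nlinarith
  calc ‖w n‖ * x ^ ((k + 1) * (n + 1))
      ≤ (A * ((n : ℝ) + 1) ^ t) * x ^ ((k + 1) * (n + 1)) := by
        apply mul_le_mul_of_nonneg_right (hw n) (by positivity)
    _ ≤ (A * ((n : ℝ) + 1) ^ t) * x ^ (k + (n + 1)) := by
        apply mul_le_mul_of_nonneg_left hxe
        have hA : 0 ≤ A := le_trans (norm_nonneg (w 0)) (by simpa using hw 0)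
        positivity
    _ = x ^ k * (A * (((n : ℝ) + 1) ^ t * x ^ (n + 1))) := by
        rw [pow_add]; ring


lemma divRearrange (f : ℕ × ℕ → ℂ) (hf : Summable f) :
    ∑' p : ℕ × ℕ, f p
      = ∑' m : ℕ, ∑ x ∈ (m + 1).divisorsAntidiagonal, f (x.1 - 1, x.2 - 1) := by
  set F : ℕ × ℕ → ℂ := fun p ↦ if p.1 = 0 ∨ p.2 = 0 then 0 else f (p.1 - 1, p.2 - 1) with hF
  have hinj : Function.Injective (fun p : ℕ × ℕ ↦ (p.1 + 1, p.2 + 1)) := by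
    intro a b h
    simp only [Prod.mk.injEq] at h
    exact Prod.ext (by omega) (by omega)
  have hcomp : ∀ p : ℕ × ℕ, F (p.1 + 1, p.2 + 1) = f p := by
    intro p; simp [hF]
  have hsupp : Function.support F ⊆ Set.range (fun p : ℕ × ℕ ↦ (p.1 + 1, p.2 + 1)) := by
    rintro ⟨a, b⟩ hp
    simp only [Function.mem_support, hF] at hp
    have ha : a ≠ 0 ∧ b ≠ 0 := by
      by_contra h
      apply hp
      rw [if_pos]
      tauto
    exact ⟨(a - 1, b - 1), by simp; omega⟩
  have h1 : ∑' p : ℕ × ℕ, f p = ∑' p, F p := by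
    rw [← Function.Injective.tsum_eq hinj hsupp]
    exact tsum_congr fun p ↦ (hcomp p).symm
  have hFsum : Summable F := by
    rw [← Function.Injective.summable_iff hinj
      (fun x hx ↦ by_contra fun h0 ↦ hx (hsupp h0))]
    exact hf.congr fun p ↦ (hcomp p).symm
  -- fiberwise
  set S : ℕ → ℂ := fun m ↦ ∑ x ∈ m.divisorsAntidiagonal, f (x.1 - 1, x.2 - 1) with hS
  have hfib : HasSum S (∑' p, F p) := by
    have h := hFsum.hasSum.tsum_fiberwise (fun p ↦ p.1 * p.2)
    refine h.congr_fun fun m ↦ ?_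
    rcases eq_or_ne m 0 with rfl | hm
    · have : ∀ p : (fun p : ℕ × ℕ ↦ p.1 * p.2) ⁻¹' {0}, F p.val = 0 := by
        rintro ⟨⟨a, b⟩, hp⟩
        simp only [Set.mem_preimage, Set.mem_singleton_iff, Nat.mul_eq_zero] at hp
        simp [hF, hp]
      rw [tsum_congr this]
      simp [hS]
    · rw [show (fun p : ℕ × ℕ ↦ p.1 * p.2) ⁻¹' {m} = m.divisorsAntidiagonal by
        ext p; simp [Nat.mem_divisorsAntidiagonal, hm]]
      rw [Finset.tsum_subtype' m.divisorsAntidiagonal F]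
      refine Finset.sum_congr rfl fun x hx ↦ ?_
      obtain ⟨h1, h2⟩ := Nat.ne_zero_of_mem_divisorsAntidiagonal hx
      simp [hF, h1, h2]
  rw [h1, ← hfib.tsum_eq, hfib.summable.tsum_eq_zero_add]
  simp only [hS, Nat.divisorsAntidiagonal_zero, Finset.sum_empty, zero_add]


lemma hasSumZ1 (q : ℂ) (hq : ‖q‖ < 1) (N k : ℕ) :
    HasSum (fun n : ℕ ↦ (((n + N).choose N : ℕ) : ℂ) * q ^ ((k + 1) * (n + 1)))
      (q ^ (k + 1) / (1 - q ^ (k + 1)) ^ (N + 1)) := by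
  set r : ℂ := q ^ (k + 1) with hr
  have hrn : ‖r‖ < 1 := by
    rw [hr, norm_pow]
    exact pow_lt_one₀ (norm_nonneg q) hq (by omega)
  have h := (hasSum_choose_mul_geometric_of_norm_lt_one N hrn).mul_left r
  have heq : (fun n : ℕ ↦ r * ((((n + N).choose N : ℕ) : ℂ) * r ^ n))
      = fun n : ℕ ↦ (((n + N).choose N : ℕ) : ℂ) * q ^ ((k + 1) * (n + 1)) := by
    funext n
    rw [pow_mul, ← hr, pow_succ]
    ring
  rw [heq] at h
  rw [mul_one_div] at h
  exact h

lemma hasSumZ2 (q : ℂ) (hq0 : q ≠ 0) (hq : ‖q‖ < 1) (N k : ℕ) (hN : 1 ≤ N) :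
    HasSum (fun n : ℕ ↦ (-1 : ℂ) ^ (N + 1) * (((n + 1).choose N : ℕ) : ℂ)
        * q ^ ((k + 1) * (n + 1)))
      (q⁻¹ ^ (k + 1) / (1 - q⁻¹ ^ (k + 1)) ^ (N + 1)) := by
  set r : ℂ := q ^ (k + 1) with hr
  have hrn : ‖r‖ < 1 := by
    rw [hr, norm_pow]
    exact pow_lt_one₀ (norm_nonneg q) hq (by omega)
  have hr0 : r ≠ 0 := pow_ne_zero _ hq0
  have hr1 : r ≠ 1 := by
    intro h; rw [h] at hrn; simp at hrn
  have h1r : (1 : ℂ) - r ≠ 0 := fun h ↦ hr1 (by linear_combination -h)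
  have h := (hasSum_choose_mul_geometric_of_norm_lt_one N hrn).mul_left (r ^ N)
  have hzero1 : ∀ m ∉ Set.range (fun n : ℕ ↦ n + N), ((m.choose N : ℕ) : ℂ) * r ^ m = 0 := by
    intro m hm
    have hmN : m < N := by
      by_contra h'
      exact hm ⟨m - N, by simp; omega⟩
    simp [Nat.choose_eq_zero_of_lt hmN]
  have h2 : HasSum (fun m : ℕ ↦ ((m.choose N : ℕ) : ℂ) * r ^ m)
      (r ^ N / (1 - r) ^ (N + 1)) := by
    apply (Function.Injective.hasSum_iff (add_left_injective N) hzero1).mp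
    have hfun : ((fun m : ℕ ↦ ((m.choose N : ℕ) : ℂ) * r ^ m) ∘ fun n : ℕ ↦ n + N)
        = fun i : ℕ ↦ r ^ N * ((((i + N).choose N : ℕ) : ℂ) * r ^ i) := by
      funext n
      simp only [Function.comp]
      rw [pow_add]
      ring
    rw [hfun]
    rw [mul_one_div] at h
    exact h
  have hzero2 : ∀ m ∉ Set.range (fun n : ℕ ↦ n + 1), ((m.choose N : ℕ) : ℂ) * r ^ m = 0 := by
    intro m hm
    have hm0 : m = 0 := by
      by_contra h'
      exact hm ⟨m - 1, by simp; omega⟩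
    subst hm0
    simp [Nat.choose_eq_zero_of_lt hN]
  have h3 : HasSum (fun n : ℕ ↦ (((n + 1).choose N : ℕ) : ℂ) * r ^ (n + 1))
      (r ^ N / (1 - r) ^ (N + 1)) := by
    have h3' := (Function.Injective.hasSum_iff (add_left_injective 1) hzero2).mpr h2
    exact h3'
  have h4 := h3.mul_left ((-1 : ℂ) ^ (N + 1))
  have heq : (fun n : ℕ ↦ (-1 : ℂ) ^ (N + 1) * ((((n + 1).choose N : ℕ) : ℂ) * r ^ (n + 1)))
      = fun n : ℕ ↦ (-1 : ℂ) ^ (N + 1) * (((n + 1).choose N : ℕ) : ℂ)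
        * q ^ ((k + 1) * (n + 1)) := by
    funext n
    rw [pow_mul, ← hr]
    ring
  rw [heq] at h4
  convert h4 using 1
  · rfl
  have hinv : q⁻¹ ^ (k + 1) = r⁻¹ := by rw [inv_pow, hr]
  rw [hinv]
  have h1ri : (1 : ℂ) - r⁻¹ = -(1 - r) / r := by field_simp; ring
  rw [h1ri, div_pow, neg_pow]
  have hcc : ((-1 : ℂ)) ^ (N + 1) * (-1) ^ (N + 1) = 1 := by
    rw [← pow_add]; exact Even.neg_one_pow ⟨N + 1, rfl⟩
  field_simp
  linear_combination (-(r ^ (N + 1))) * hcc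

/-- For `0 < |q| < 1` and `s ≥ 2`,
`Z_s(q) + Z_s(1/q) = (2/(s-1)!) ∑_{j=2, j even}^s c(s-1,j-1) ζ_q(j)`,
where `Z_s(q) = ∑_{k≥1} q^k/(1-q^k)^s` and `c(N,j)` are the unsigned Stirling numbers
of the first kind, defined by `ℓ(ℓ+1)⋯(ℓ+N-1) = ∑_{j=1}^N c(N,j) ℓ^j`. -/
theorem Zs_add_Zs_inv (q : ℂ) (hq0 : q ≠ 0) (hq : ‖q‖ < 1) (s : ℕ) (hs : 2 ≤ s)
    (c : ℕ → ℕ → ℂ)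
    (hc : ∀ N : ℕ, 1 ≤ N → ∀ ℓ : ℕ,
      (∏ i ∈ Finset.range N, ((ℓ : ℂ) + i)) = ∑ j ∈ Finset.Icc 1 N, c N j * (ℓ : ℂ) ^ j) :
    (∑' k : ℕ, q ^ (k + 1) / (1 - q ^ (k + 1)) ^ s) +
        (∑' k : ℕ, q⁻¹ ^ (k + 1) / (1 - q⁻¹ ^ (k + 1)) ^ s) =
      (2 / ((s - 1).factorial : ℂ)) *
        ∑ j ∈ (Finset.Icc 2 s).filter (fun j => Even j),
          c (s - 1) (j - 1) *
            ∑' k : ℕ, (∑ d ∈ (k + 1).divisors, (d : ℂ) ^ (j - 1)) * q ^ (k + 1) := by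
  obtain ⟨N, rfl⟩ : ∃ N, s = N + 1 := ⟨s - 1, by omega⟩
  have hN : 1 ≤ N := by omega
  have hcC : ∀ z : ℂ, (∏ i ∈ Finset.range N, (z + i)) = ∑ j ∈ Finset.Icc 1 N, c N j * z ^ j :=
    polyExt N c (hc N hN)
  simp only [Nat.add_sub_cancel]
  -- the two double series
  set F1 : ℕ × ℕ → ℂ :=
    fun p ↦ (((p.2 + N).choose N : ℕ) : ℂ) * q ^ ((p.1 + 1) * (p.2 + 1)) with hF1
  set F2 : ℕ × ℕ → ℂ :=
    fun p ↦ ((-1 : ℂ) ^ (N + 1) * (((p.2 + 1).choose N : ℕ) : ℂ))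
      * q ^ ((p.1 + 1) * (p.2 + 1)) with hF2
  have hS1 : Summable F1 := by
    apply masterSummable q hq (((N : ℝ) + 1) ^ N) N (fun n ↦ (((n + N).choose N : ℕ) : ℂ))
    intro n
    rw [Complex.norm_natCast]
    have hnat : (n + N).choose N ≤ (N + 1) ^ N * (n + 1) ^ N := by
      calc (n + N).choose N ≤ (n + N) ^ N := Nat.choose_le_pow _ _
        _ ≤ ((N + 1) * (n + 1)) ^ N := Nat.pow_le_pow_left (by nlinarith) N
        _ = (N + 1) ^ N * (n + 1) ^ N := mul_pow _ _ _
    calc ((((n + N).choose N : ℕ)) : ℝ) ≤ (((N + 1) ^ N * (n + 1) ^ N : ℕ) : ℝ) := by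
          exact_mod_cast hnat
      _ = ((N : ℝ) + 1) ^ N * ((n : ℝ) + 1) ^ N := by push_cast; ring
  have hS2 : Summable F2 := by
    apply masterSummable q hq 1 N (fun n ↦ (-1 : ℂ) ^ (N + 1) * (((n + 1).choose N : ℕ) : ℂ))
    intro n
    rw [norm_mul, norm_pow, norm_neg, norm_one, one_pow, one_mul, Complex.norm_natCast]
    calc ((((n + 1).choose N : ℕ)) : ℝ) ≤ (((n + 1) ^ N : ℕ) : ℝ) := by
          exact_mod_cast Nat.choose_le_pow (n + 1) N
      _ = 1 * ((n : ℝ) + 1) ^ N := by push_cast; ring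
  have hG : ∀ j : ℕ,
      Summable (fun p : ℕ × ℕ ↦ (((p.2 + 1 : ℕ)) : ℂ) ^ j * q ^ ((p.1 + 1) * (p.2 + 1))) := by
    intro j
    apply masterSummable q hq 1 j (fun n ↦ (((n + 1 : ℕ)) : ℂ) ^ j)
    intro n
    rw [norm_pow, Complex.norm_natCast, one_mul]
    push_cast
    exact le_rfl
  have key1 : ∑' p : ℕ × ℕ, F1 p = ∑' k : ℕ, q ^ (k + 1) / (1 - q ^ (k + 1)) ^ (N + 1) := by
    rw [hS1.tsum_prod]
    exact tsum_congr fun k ↦ (hasSumZ1 q hq N k).tsum_eq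
  have key2 : ∑' p : ℕ × ℕ, F2 p
      = ∑' k : ℕ, q⁻¹ ^ (k + 1) / (1 - q⁻¹ ^ (k + 1)) ^ (N + 1) := by
    rw [hS2.tsum_prod]
    exact tsum_congr fun k ↦ (hasSumZ2 q hq0 hq N k hN).tsum_eq
  rw [← key1, ← key2, ← hS1.tsum_add hS2]
  have hpt : ∀ p : ℕ × ℕ, F1 p + F2 p = ∑ j ∈ (Finset.Icc 1 N).filter (fun j ↦ Odd j),
      (2 / (N ! : ℂ) * c N j) * ((((p.2 + 1 : ℕ)) : ℂ) ^ j * q ^ ((p.1 + 1) * (p.2 + 1))) := by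
    intro p
    have hD := coeffD N c hcC p.2
    have h1 : F1 p + F2 p = ((((p.2 + N).choose N : ℕ) : ℂ)
        + (-1) ^ (N + 1) * (((p.2 + 1).choose N : ℕ) : ℂ)) * q ^ ((p.1 + 1) * (p.2 + 1)) := by
      simp only [hF1, hF2]; ring
    rw [h1, hD, Finset.mul_sum, Finset.sum_mul]
    refine Finset.sum_congr rfl fun j hj ↦ ?_
    push_cast
    ring
  rw [tsum_congr hpt, Summable.tsum_finsetSum (fun j _ ↦ ((hG j).mul_left (2 / (N ! : ℂ) * c N j)))]
  have hTj : ∀ j : ℕ, ∑' p : ℕ × ℕ,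
        (2 / (N ! : ℂ) * c N j) * ((((p.2 + 1 : ℕ)) : ℂ) ^ j * q ^ ((p.1 + 1) * (p.2 + 1)))
      = (2 / (N ! : ℂ) * c N j)
        * ∑' m : ℕ, (∑ d ∈ (m + 1).divisors, (d : ℂ) ^ j) * q ^ (m + 1) := by
    intro j
    rw [tsum_mul_left]
    congr 1
    rw [divRearrange _ (hG j)]
    refine tsum_congr fun m ↦ ?_
    have hcong : ∀ x ∈ (m + 1).divisorsAntidiagonal,
        (fun p : ℕ × ℕ ↦ (((p.2 + 1 : ℕ)) : ℂ) ^ j * q ^ ((p.1 + 1) * (p.2 + 1)))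
          (x.1 - 1, x.2 - 1) = ((x.2 : ℕ) : ℂ) ^ j * q ^ (m + 1) := by
      intro x hx
      obtain ⟨hx1, hx2⟩ := Nat.ne_zero_of_mem_divisorsAntidiagonal hx
      have hmul := (Nat.mem_divisorsAntidiagonal.mp hx).1
      simp only
      have e1 : x.1 - 1 + 1 = x.1 := by omega
      have e2 : x.2 - 1 + 1 = x.2 := by omega
      rw [e1, e2, hmul]
    rw [Finset.sum_congr rfl hcong,
      Nat.sum_divisorsAntidiagonal' (f := fun _ y ↦ ((y : ℕ) : ℂ) ^ j * q ^ (m + 1))]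
    exact (Finset.sum_mul _ _ _).symm
  simp only [hTj]
  rw [Finset.mul_sum]
  refine Finset.sum_nbij' (fun j ↦ j + 1) (fun j ↦ j - 1) ?_ ?_ ?_ ?_ ?_
  · intro a ha
    simp only [Finset.mem_filter, Finset.mem_Icc] at ha ⊢
    exact ⟨⟨by omega, by omega⟩, ha.2.add_one⟩
  · intro b hb
    simp only [Finset.mem_filter, Finset.mem_Icc] at hb ⊢
    refine ⟨⟨by omega, by omega⟩, Nat.Even.sub_odd (by omega) hb.2 odd_one⟩
  · intro a ha
    simp only [Nat.add_sub_cancel]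
  · intro b hb
    simp only [Finset.mem_filter, Finset.mem_Icc] at hb
    omega
  · intro a ha
    simp only [Nat.add_sub_cancel]
    ring
end

section
/- Let n≥0, A even with 1≤r≤A/2, and define R_n(T;q) = (q;q)_n^{A-2r} q^{-(A-2r)n/4} · (q^{-rn}T;q)_{rn} (q^{n+1}T;q)_{rn} / (T;q)_{n+1}^A · T^{(A-2r)n/2}. Then R_n(q^n T; 1/q) = R_n(T; q) as rational functions of T. -/
/-- The rational function `R_n(T;q)` of the paper: for `n ≥ 0`, `A` even, `1 ≤ r ≤ A/2`,
`R_n(T;q) = (q;q)_n^{A-2r} q^{-(A-2r)n/4} (q^{-rn}T;q)_{rn}(q^{n+1}T;q)_{rn}/(T;q)_{n+1}^A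
  · T^{(A-2r)n/2}` (for real `q > 0`, the fractional power of `q` being a real power). -/
noncomputable def Rn (A r n : ℕ) (q T : ℝ) : ℝ :=
  (∏ i ∈ Finset.range n, (1 - q ^ (i + 1))) ^ (A - 2 * r) *
    q ^ (-(((A : ℝ) - 2 * r) * n / 4)) *
    ((∏ i ∈ Finset.range (r * n), (1 - q ^ ((i : ℤ) - (r * n : ℤ)) * T)) *
      ∏ i ∈ Finset.range (r * n), (1 - q ^ (n + 1 + i) * T)) /
    (∏ i ∈ Finset.range (n + 1), (1 - q ^ i * T)) ^ A *
    T ^ ((A - 2 * r) * n / 2)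

/-!
Under `q ↦ 1/q`, `T ↦ q^n T` the factor `1 - q^j T` becomes `1 - q^(n-j) T`, so each product of
`T`-factors, read backwards, is carried onto one of them: `(T;q)_{n+1}` onto itself, and
`(q^{-rn}T;q)_{rn}`, `(q^{n+1}T;q)_{rn}` onto each other. Only the constant remains:
`(1/q;1/q)_n = (-1)^n q^{-n(n+1)/2} (q;q)_n`, and as `A - 2r = 2k` is even the sign drops out
and `q^{-kn(n+1)} · q^{kn/2} · q^{kn²}` (the last from `(q^n T)^{kn}`) is `q^{-kn/2}`.
-/

open Finset

section Field

variable {K : Type*} [Field K] {q : K}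

theorem prod_one_sub_inv_pow_succ_mul_prod_neg_pow_succ (hq : q ≠ 0) (n : ℕ) :
    (∏ i ∈ range n, (1 - q⁻¹ ^ (i + 1))) * ∏ i ∈ range n, (-q ^ (i + 1)) =
      ∏ i ∈ range n, (1 - q ^ (i + 1)) := by
  rw [← prod_mul_distrib]
  refine prod_congr rfl fun i _ => ?_
  rw [inv_pow]
  field_simp
  ring

theorem prod_one_sub_inv_pow_mul_pow_mul (hq : q ≠ 0) (n : ℕ) (T : K) :
    ∏ i ∈ range (n + 1), (1 - q⁻¹ ^ i * (q ^ n * T)) = ∏ i ∈ range (n + 1), (1 - q ^ i * T) := by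
  rw [← prod_range_reflect (fun i => 1 - q ^ i * T)]
  refine prod_congr rfl fun j hj => ?_
  simp only [mem_range] at hj
  have hn : q ^ n = q ^ (n + 1 - 1 - j) * q ^ j := by
    rw [← pow_add]; congr 1; omega
  rw [hn, inv_pow]
  field_simp

theorem prod_one_sub_inv_zpow_sub_mul_pow_mul (q : K) (n m : ℕ) (T : K) :
    ∏ i ∈ range m, (1 - q⁻¹ ^ ((i : ℤ) - m) * (q ^ n * T)) =
      ∏ i ∈ range m, (1 - q ^ (n + 1 + i) * T) := by
  rw [← prod_range_reflect (fun i => 1 - q ^ (n + 1 + i) * T)]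
  refine prod_congr rfl fun j hj => ?_
  simp only [mem_range] at hj
  have hexp : q⁻¹ ^ ((j : ℤ) - m) = q ^ (m - j) := by
    rw [inv_zpow', ← zpow_natCast]; congr 1; omega
  rw [hexp, show n + 1 + (m - 1 - j) = (m - j) + n by omega, pow_add]
  ring

theorem prod_one_sub_inv_pow_add_mul_pow_mul (hq : q ≠ 0) (n m : ℕ) (T : K) :
    ∏ i ∈ range m, (1 - q⁻¹ ^ (n + 1 + i) * (q ^ n * T)) =
      ∏ i ∈ range m, (1 - q ^ ((i : ℤ) - m) * T) := by
  rw [← prod_range_reflect (fun i => 1 - q ^ ((i : ℤ) - m) * T)]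
  refine prod_congr rfl fun j hj => ?_
  simp only [mem_range] at hj
  rw [← mul_assoc, inv_pow, ← zpow_natCast, ← zpow_natCast, ← zpow_neg, ← zpow_add₀ hq]
  congr 3; omega

end Field

theorem sq_prod_neg_pow_succ {R : Type*} [CommRing R] (q : R) (n : ℕ) :
    (∏ i ∈ range n, (-q ^ (i + 1))) ^ 2 = q ^ (n * (n + 1)) := by
  have hsum : ∑ i ∈ range n, 2 * (i + 1) = n * (n + 1) := by
    have gauss := sum_range_id_mul_two (n + 1)
    rw [sum_range_succ', add_zero, Nat.add_sub_cancel] at gauss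
    rw [← mul_sum]; linarith
  rw [← prod_pow, ← hsum, ← prod_pow_eq_pow_sum]
  refine prod_congr rfl fun i _ => ?_
  rw [neg_sq, ← pow_mul, mul_comm]

theorem Rn_symmetry_general (A r n : ℕ) (hA : Even A) (hr2 : 2 * r ≤ A)
    (q : ℝ) (hq : 0 < q) :
    ∀ T : ℝ, Rn A r n (1 / q) (q ^ n * T) = Rn A r n q T := by
  intro T
  obtain ⟨k, hk⟩ : Even (A - 2 * r) := (Nat.even_sub hr2).2 (iff_of_true hA (even_two_mul r))
  have hAr : (A : ℝ) - 2 * r = 2 * k := by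
    rw [show A = 2 * r + (k + k) by omega]; push_cast; ring
  have hTexp : (A - 2 * r) * n / 2 = k * n := by
    rw [hk, ← two_mul, mul_assoc, Nat.mul_div_cancel_left _ two_pos]
  have hqexp : q⁻¹ ^ (-(2 * (k : ℝ) * n / 4)) = q ^ (k * n) * q ^ (-(2 * (k : ℝ) * n / 4)) := by
    rw [Real.inv_rpow hq.le, ← Real.rpow_neg hq.le, neg_neg, ← Real.rpow_natCast,
      ← Real.rpow_add hq]
    congr 1; push_cast; ring
  have hN₁ := prod_one_sub_inv_zpow_sub_mul_pow_mul q n (r * n) T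
  have hN₂ := prod_one_sub_inv_pow_add_mul_pow_mul hq.ne' n (r * n) T
  push_cast at hN₁ hN₂
  unfold Rn
  simp only [one_div, hAr, hTexp, hqexp, hN₁, hN₂, prod_one_sub_inv_pow_mul_pow_mul hq.ne']
  rw [hk, ← two_mul, ← prod_one_sub_inv_pow_succ_mul_prod_neg_pow_succ hq.ne' n]
  conv_rhs => rw [pow_mul, mul_pow, sq_prod_neg_pow_succ]
  ring

/-- `R_n(q^n T; 1/q) = R_n(T; q)` as rational functions of `T`. -/
theorem Rn_symmetry (A r n : ℕ) (hA : Even A) (hr : 1 ≤ r) (hr2 : 2 * r ≤ A)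
    (q : ℝ) (hq : 0 < q) :
    ∀ T : ℝ, Rn A r n (1 / q) (q ^ n * T) = Rn A r n q T :=
  Rn_symmetry_general A r n hA hr2 q hq
end

section
/- For complex q with |q|>1, lim_{n→∞} (1/n²) log|d_n(q)| = (3/π²) log|q|, where d_n(q) = ∏_{ℓ=1}^n Φ_ℓ(q). -/
open Filter Finset Real ArithmeticFunction Topology
open scoped ArithmeticFunction.Moebius

lemma moebius_summable_sq : Summable (fun n : ℕ => (μ n : ℝ) / (n : ℝ) ^ 2) := by
  apply Summable.of_norm_bounded (g := fun n : ℕ => 1 / (n : ℝ) ^ 2)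
    (summable_one_div_nat_pow.mpr one_lt_two)
  intro n
  rw [norm_div, Real.norm_eq_abs, Real.norm_eq_abs, abs_of_nonneg (by positivity : (0:ℝ) ≤ (n:ℝ)^2)]
  rcases eq_or_ne n 0 with rfl | hn
  · simp
  · apply div_le_div_of_nonneg_right ?_ (by positivity)
    exact_mod_cast abs_moebius_le_one

lemma moebius_tsum_sq : ∑' d : ℕ, ((μ d : ℝ) / (d : ℝ) ^ 2) = 6 / π ^ 2 := by
  have hs : 1 < (2 : ℂ).re := by norm_num
  have hmul := LSeries_zeta_mul_Lseries_moebius hs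
  rw [LSeries_zeta_eq_riemannZeta hs, riemannZeta_two] at hmul
  have hπ : ((π : ℂ))^2 ≠ 0 := by simp [Real.pi_ne_zero]
  have hL : LSeries (fun n => (μ n : ℂ)) 2 = 6 / (π : ℂ) ^ 2 := by
    rw [eq_div_iff hπ]
    field_simp at hmul
    linear_combination hmul
  have hterm : ∀ n : ℕ, LSeries.term (fun n => (μ n : ℂ)) 2 n
      = (((μ n : ℝ) / (n : ℝ) ^ 2 : ℝ) : ℂ) := by
    intro n
    rcases eq_or_ne n 0 with rfl | hn
    · simp [LSeries.term]
    · rw [LSeries.term_of_ne_zero hn]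
      rw [show ((2 : ℂ)) = ((2 : ℕ) : ℂ) by norm_num, Complex.cpow_natCast]
      push_cast
      ring
  have : ((∑' d : ℕ, ((μ d : ℝ) / (d : ℝ) ^ 2) : ℝ) : ℂ) = 6 / (π : ℂ) ^ 2 := by
    rw [Complex.ofReal_tsum, ← hL]
    exact (tsum_congr fun n => (hterm n).symm)
  have h6 : ((6 / π ^ 2 : ℝ) : ℂ) = 6 / (π : ℂ) ^ 2 := by push_cast; ring
  exact_mod_cast this.trans h6.symm

lemma swap_sum (n : ℕ) (F : ℕ → ℕ → ℝ) :
    ∑ ℓ ∈ Finset.Icc 1 n, ∑ x ∈ ℓ.divisorsAntidiagonal, F x.1 x.2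
      = ∑ a ∈ Finset.Icc 1 n, ∑ b ∈ Finset.Icc 1 (n / a), F a b := by
  rw [Finset.sum_sigma', Finset.sum_sigma']
  refine Finset.sum_nbij' (fun x => ⟨x.2.1, x.2.2⟩) (fun y => ⟨y.1 * y.2, (y.1, y.2)⟩)
    ?_ ?_ ?_ ?_ ?_
  · rintro ⟨ℓ, a, b⟩ hx
    simp only [Finset.mem_sigma, Finset.mem_Icc, Nat.mem_divisorsAntidiagonal] at hx ⊢
    obtain ⟨⟨h1, h2⟩, hab, hℓ⟩ := hx
    have ha : 0 < a := by
      rcases Nat.eq_zero_or_pos a with rfl | h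
      · simp at hab; omega
      · exact h
    have hb : 0 < b := by
      rcases Nat.eq_zero_or_pos b with rfl | h
      · simp at hab; omega
      · exact h
    refine ⟨⟨ha, ?_⟩, hb, ?_⟩
    · calc a ≤ a * b := Nat.le_mul_of_pos_right a hb
        _ = ℓ := hab
        _ ≤ n := h2
    · rw [Nat.le_div_iff_mul_le ha]
      calc b * a = ℓ := by rw [mul_comm]; exact hab
        _ ≤ n := h2
  · rintro ⟨a, b⟩ hy
    simp only [Finset.mem_sigma, Finset.mem_Icc, Nat.mem_divisorsAntidiagonal] at hy ⊢
    obtain ⟨⟨ha, han⟩, hb, hbn⟩ := hy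
    have habn : b * a ≤ n := (Nat.le_div_iff_mul_le (by omega)).mp hbn
    constructor
    · constructor
      · nlinarith
      · nlinarith
    · simp only [and_true, true_and]
      positivity
  · rintro ⟨ℓ, a, b⟩ hx
    simp only [Finset.mem_sigma, Nat.mem_divisorsAntidiagonal] at hx
    obtain ⟨-, hab, -⟩ := hx
    simp [hab]
  · rintro ⟨a, b⟩ -
    rfl
  · rintro ⟨ℓ, a, b⟩ -
    rfl

lemma gauss_sum (m : ℕ) : ∑ b ∈ Finset.Icc 1 m, (b : ℝ) = m * (m + 1) / 2 := by
  induction m with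
  | zero => simp
  | succ k ih =>
    rw [Finset.sum_Icc_succ_top (by omega), ih]
    push_cast
    ring

lemma totient_sum_eq (n : ℕ) :
    ∑ ℓ ∈ Finset.Icc 1 n, (Nat.totient ℓ : ℝ)
      = ∑ d ∈ Finset.Icc 1 n, (μ d : ℝ) * (((n / d : ℕ) : ℝ) * (((n / d : ℕ) : ℝ) + 1) / 2) := by
  have hinv : ∀ m > 0, (Nat.totient m : ℝ)
      = ∑ x ∈ m.divisorsAntidiagonal, (μ x.1 : ℤ) • (x.2 : ℝ) := by
    have h0 : ∀ m : ℕ, m > 0 → ∑ i ∈ m.divisors, (Nat.totient i : ℝ) = (m : ℝ) := by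
      intro m hm
      rw [← Nat.cast_sum]
      exact_mod_cast congrArg (Nat.cast (R := ℝ)) (Nat.sum_totient m)
    have := (ArithmeticFunction.sum_eq_iff_sum_smul_moebius_eq
      (R := ℝ) (f := fun d => (Nat.totient d : ℝ)) (g := fun d => (d : ℝ))).mp h0
    intro m hm
    exact (this m hm).symm
  calc ∑ ℓ ∈ Finset.Icc 1 n, (Nat.totient ℓ : ℝ)
      = ∑ ℓ ∈ Finset.Icc 1 n, ∑ x ∈ ℓ.divisorsAntidiagonal, (μ x.1 : ℝ) * (x.2 : ℝ) := by
        refine Finset.sum_congr rfl fun ℓ hℓ => ?_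
        rw [Finset.mem_Icc] at hℓ
        rw [hinv ℓ (by omega)]
        exact Finset.sum_congr rfl fun x _ => zsmul_eq_mul ((x.2 : ℝ)) (μ x.1)
    _ = ∑ a ∈ Finset.Icc 1 n, ∑ b ∈ Finset.Icc 1 (n / a), (μ a : ℝ) * (b : ℝ) :=
        swap_sum n (fun a b => (μ a : ℝ) * (b : ℝ))
    _ = ∑ d ∈ Finset.Icc 1 n, (μ d : ℝ) * (((n / d : ℕ) : ℝ) * (((n / d : ℕ) : ℝ) + 1) / 2) := by
        refine Finset.sum_congr rfl fun a _ => ?_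
        rw [← Finset.mul_sum, gauss_sum]

lemma nat_div_tendsto (d : ℕ) (hd : 1 ≤ d) :
    Filter.Tendsto (fun n : ℕ => ((n / d : ℕ) : ℝ) / n) atTop (𝓝 (1 / d)) := by
  have hd' : (0:ℝ) < d := by exact_mod_cast hd
  have hlow : Filter.Tendsto (fun n : ℕ => 1/(d:ℝ) - 1/n) atTop (𝓝 (1/d)) := by
    have := tendsto_const_nhds (x := 1/(d:ℝ)) (f := atTop (α := ℕ))
    simpa using this.sub tendsto_one_div_atTop_nhds_zero_nat
  apply tendsto_of_tendsto_of_tendsto_of_le_of_le' hlow tendsto_const_nhds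
  · filter_upwards [eventually_ge_atTop 1] with n hn
    have hn' : (0:ℝ) < n := by exact_mod_cast hn
    set k := n / d with hk
    have h1 : (d:ℝ) * k + ((n % d : ℕ) : ℝ) = n := by exact_mod_cast Nat.div_add_mod n d
    have h2 : ((n % d : ℕ) : ℝ) < d := by exact_mod_cast Nat.mod_lt n (by omega)
    have hstep : (n:ℝ)/d - 1 ≤ k := by
      rw [sub_le_iff_le_add, div_le_iff₀ hd']
      nlinarith
    have heq : 1/(d:ℝ) - 1/n = ((n:ℝ)/d - 1)/n := by field_simp
    rw [heq]
    gcongr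
  · filter_upwards [eventually_ge_atTop 1] with n hn
    have hn' : (0:ℝ) < n := by exact_mod_cast hn
    have hk2 : ((n / d : ℕ) : ℝ) ≤ (n:ℝ)/d := Nat.cast_div_le
    have heq : ((n:ℝ)/d)/n = 1/d := by field_simp
    calc ((n / d : ℕ) : ℝ)/n ≤ ((n:ℝ)/d)/n := by gcongr
      _ = 1/d := heq

noncomputable def ufun (n d : ℕ) : ℝ :=
  if d ∈ Finset.Icc 1 n then
    (μ d : ℝ) * (((n / d : ℕ) : ℝ) * (((n / d : ℕ) : ℝ) + 1) / 2) / (n:ℝ)^2 else 0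

lemma ufun_tendsto (d : ℕ) :
    Filter.Tendsto (fun n : ℕ => ufun n d) atTop (𝓝 ((μ d : ℝ) / (2 * (d:ℝ)^2))) := by
  rcases Nat.eq_zero_or_pos d with rfl | hd
  · have h0 : ((μ 0 : ℝ) / (2 * ((0:ℕ):ℝ)^2)) = 0 := by simp
    rw [h0]
    exact tendsto_const_nhds.congr (fun n => by simp [ufun])
  · have hD := nat_div_tendsto d hd
    have hone : Filter.Tendsto (fun n : ℕ => 1/(n:ℝ)) atTop (𝓝 0) :=
      tendsto_one_div_atTop_nhds_zero_nat
    have hmain : Filter.Tendsto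
        (fun n : ℕ => (μ d : ℝ) * ((((n / d : ℕ) : ℝ)/n) * ((((n / d : ℕ) : ℝ)/n) + 1/n) / 2))
        atTop (𝓝 ((μ d : ℝ) * ((1/(d:ℝ)) * ((1/(d:ℝ)) + 0) / 2))) := by
      exact (((hD.mul (hD.add hone)).div_const 2).const_mul _)
    have hlim : (μ d : ℝ) * ((1/(d:ℝ)) * ((1/(d:ℝ)) + 0) / 2) = (μ d : ℝ) / (2 * (d:ℝ)^2) := by
      ring
    rw [hlim] at hmain
    apply hmain.congr'
    filter_upwards [eventually_ge_atTop d] with n hn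
    have hn0 : (0:ℝ) < n := by
      have : 1 ≤ n := le_trans hd hn
      exact_mod_cast this
    rw [ufun, if_pos (Finset.mem_Icc.mpr ⟨hd, hn⟩)]
    ring

lemma ufun_bound {n d : ℕ} (hn : 1 ≤ n) : ‖ufun n d‖ ≤ 1 / (d:ℝ)^2 := by
  rw [ufun]
  split_ifs with h
  · rw [Finset.mem_Icc] at h
    obtain ⟨hd, hdn⟩ := h
    have hd' : (0:ℝ) < d := by exact_mod_cast hd
    have hn' : (0:ℝ) < n := by exact_mod_cast hn
    set k := n / d with hkdef
    have hk1 : (1:ℝ) ≤ (k:ℝ) := by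
      have : 1 ≤ k := (Nat.one_le_div_iff (by omega)).mpr hdn
      exact_mod_cast this
    have hkd : (k:ℝ) * d ≤ n := by
      have := Nat.cast_div_le (α := ℝ) (m := n) (n := d)
      rw [← hkdef] at this
      calc (k:ℝ) * d ≤ ((n:ℝ)/d) * d := by
            apply mul_le_mul_of_nonneg_right this (le_of_lt hd')
        _ = n := by field_simp
    have hμ : |(μ d : ℝ)| ≤ 1 := by exact_mod_cast abs_moebius_le_one
    rw [Real.norm_eq_abs, abs_div, abs_mul, abs_of_nonneg (by positivity : (0:ℝ) ≤ (n:ℝ)^2),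
      abs_of_nonneg (by positivity : (0:ℝ) ≤ (k:ℝ) * ((k:ℝ)+1)/2)]
    calc |(μ d : ℝ)| * ((k:ℝ) * ((k:ℝ)+1)/2) / (n:ℝ)^2
        ≤ 1 * ((k:ℝ) * ((k:ℝ)+1)/2) / (n:ℝ)^2 := by
          apply div_le_div_of_nonneg_right ?_ (by positivity)
          apply mul_le_mul_of_nonneg_right hμ (by positivity)
      _ ≤ 1 / (d:ℝ)^2 := by
          rw [one_mul, div_le_div_iff₀ (by positivity) (by positivity)]
          nlinarith [mul_le_mul hkd hkd (by positivity) hn'.le]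
  · simp only [norm_zero]
    positivity

lemma totient_asymptotics_aux
    (hm : ∑' d : ℕ, ((μ d : ℝ) / (d : ℝ) ^ 2) = 6 / π ^ 2)
    (hts : ∀ n : ℕ, ∑ ℓ ∈ Finset.Icc 1 n, (Nat.totient ℓ : ℝ)
      = ∑ d ∈ Finset.Icc 1 n, (μ d : ℝ) * (((n / d : ℕ) : ℝ) * (((n / d : ℕ) : ℝ) + 1) / 2)) :
    Filter.Tendsto (fun n : ℕ => (∑ ℓ ∈ Finset.Icc 1 n, (Nat.totient ℓ : ℝ)) / (n:ℝ)^2)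
      atTop (𝓝 (3 / π ^ 2)) := by
  have hsum : Summable (fun d : ℕ => 1 / (d:ℝ)^2) := summable_one_div_nat_pow.mpr one_lt_two
  have hT := tendsto_tsum_of_dominated_convergence (f := fun n d => ufun n d)
    (g := fun d => (μ d : ℝ) / (2 * (d:ℝ)^2)) (𝓕 := atTop) hsum ufun_tendsto ?_
  · have hg : ∑' d : ℕ, ((μ d : ℝ) / (2 * (d:ℝ)^2)) = 3 / π ^ 2 := by
      have : (fun d : ℕ => (μ d : ℝ) / (2 * (d:ℝ)^2))
          = fun d : ℕ => (1/2) * ((μ d : ℝ) / (d:ℝ)^2) := by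
        funext d; ring
      rw [this, tsum_mul_left, hm]
      ring
    rw [hg] at hT
    apply hT.congr
    intro n
    rw [tsum_eq_sum (s := Finset.Icc 1 n) (fun d hd => by simp only [ufun, if_neg hd])]
    rw [hts n, Finset.sum_div]
    refine Finset.sum_congr rfl fun d hd => ?_
    simp only [ufun, if_pos hd]
  · filter_upwards [eventually_ge_atTop 1] with n hn
    exact fun d => ufun_bound hn

section part2
variable {q : ℂ}

lemma cyclo_ne_zero (hq : 1 < ‖q‖) (ℓ : ℕ) (hℓ : 1 ≤ ℓ) : (Polynomial.cyclotomic ℓ ℂ).eval q ≠ 0 := by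
  intro h0
  obtain ⟨c, hc⟩ := Polynomial.cyclotomic.dvd_X_pow_sub_one ℓ ℂ
  have hev : q ^ ℓ - 1 = 0 := by
    have := congrArg (Polynomial.eval q) hc
    simpa [h0] using this
  have h1 : ‖q ^ ℓ‖ = 1 := by
    rw [show q ^ ℓ = 1 by linear_combination hev]
    simp
  rw [norm_pow] at h1
  have : 1 < ‖q‖ ^ ℓ := one_lt_pow₀ hq (by omega)
  rw [h1] at this
  exact lt_irrefl 1 this

lemma log_prod_cyclo (hq : 1 < ‖q‖) (m : ℕ) (hm : 0 < m) :
    ∑ d ∈ m.divisors, Real.log (‖(Polynomial.cyclotomic d ℂ).eval q‖)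
      = Real.log (‖q ^ m - 1‖) := by
  rw [← Real.log_prod (fun d hd => by
    exact norm_ne_zero_iff.mpr (cyclo_ne_zero hq d (Nat.pos_of_mem_divisors hd)))]
  congr 1
  rw [← norm_prod]
  congr 1
  have h := Polynomial.prod_cyclotomic_eq_X_pow_sub_one hm ℂ
  calc ∏ d ∈ m.divisors, (Polynomial.cyclotomic d ℂ).eval q
      = (∏ d ∈ m.divisors, Polynomial.cyclotomic d ℂ).eval q := (Polynomial.eval_prod _ _ q).symm
    _ = q ^ m - 1 := by rw [h]; simp

lemma cyclo_inv (hq : 1 < ‖q‖) (m : ℕ) (hm : m > 0) :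
    Real.log (‖(Polynomial.cyclotomic m ℂ).eval q‖)
      = ∑ x ∈ m.divisorsAntidiagonal,
          (μ x.1 : ℤ) • Real.log (‖q ^ x.2 - 1‖) := by
  have h0 : ∀ m : ℕ, m > 0 →
      ∑ d ∈ m.divisors, Real.log (‖(Polynomial.cyclotomic d ℂ).eval q‖)
        = Real.log (‖q ^ m - 1‖) := fun m hm => log_prod_cyclo hq m hm
  have := (ArithmeticFunction.sum_eq_iff_sum_smul_moebius_eq
    (R := ℝ) (f := fun d => Real.log (‖(Polynomial.cyclotomic d ℂ).eval q‖))
    (g := fun d => Real.log (‖q ^ d - 1‖))).mp h0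
  exact (this m hm).symm

lemma totient_inv (m : ℕ) (hm : m > 0) : (Nat.totient m : ℝ)
    = ∑ x ∈ m.divisorsAntidiagonal, (μ x.1 : ℤ) • (x.2 : ℝ) := by
  have h0 : ∀ m : ℕ, m > 0 → ∑ i ∈ m.divisors, (Nat.totient i : ℝ) = (m : ℝ) := by
    intro m hm
    rw [← Nat.cast_sum]
    exact_mod_cast congrArg (Nat.cast (R := ℝ)) (Nat.sum_totient m)
  have := (ArithmeticFunction.sum_eq_iff_sum_smul_moebius_eq
    (R := ℝ) (f := fun d => (Nat.totient d : ℝ)) (g := fun d => (d : ℝ))).mp h0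
  exact (this m hm).symm

lemma E_bound (hq : 1 < ‖q‖) (d : ℕ) (hd : 1 ≤ d) :
    |Real.log (‖q ^ d - 1‖) - d * Real.log (‖q‖)|
      ≤ (‖q‖)⁻¹ ^ d / (1 - (‖q‖)⁻¹) := by
  set A := ‖q‖ with hA
  have hA1 : 1 < A := hq
  have hA0 : 0 < A := lt_trans one_pos hA1
  set r := A⁻¹ with hrdef
  have hr0 : 0 < r := inv_pos.mpr hA0
  have hr1 : r < 1 := inv_lt_one_of_one_lt₀ hA1
  have hrd1 : r ^ d < 1 := pow_lt_one₀ hr0.le hr1 (by omega)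
  have hrdr : r ^ d ≤ r := by
    calc r ^ d ≤ r ^ 1 := pow_le_pow_of_le_one hr0.le hr1.le hd
      _ = r := pow_one r
  have hAd : 1 < A ^ d := one_lt_pow₀ hA1 (by omega)
  have hAd0 : (0:ℝ) < A ^ d := lt_trans one_pos hAd
  have hup : ‖q ^ d - 1‖ ≤ A ^ d + 1 := by
    calc ‖q ^ d - 1‖ ≤ ‖q ^ d‖ + ‖1‖ :=
          norm_sub_le _ _
      _ = A ^ d + 1 := by rw [norm_pow, norm_one]
  have hlo : A ^ d - 1 ≤ ‖q ^ d - 1‖ := by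
    have := norm_sub_norm_le (q ^ d) 1
    calc A ^ d - 1 = ‖q ^ d‖ - ‖1‖ := by rw [norm_pow, norm_one]
      _ ≤ ‖q ^ d - 1‖ := norm_sub_norm_le _ _
  have habs0 : (0:ℝ) < A ^ d - 1 := by linarith
  have hlogpow : (d:ℝ) * Real.log A = Real.log (A ^ d) := by rw [Real.log_pow]
  have hrinv : (A ^ d)⁻¹ = r ^ d := by rw [hrdef, inv_pow]
  rw [abs_le]
  constructor
  · -- lower bound : -(r^d/(1-r)) ≤ log |q^d-1| - d log A
    have h1 : Real.log (A ^ d * (1 - r ^ d)) ≤ Real.log (‖q ^ d - 1‖) := by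
      apply Real.log_le_log (by nlinarith)
      calc A ^ d * (1 - r ^ d) = A ^ d - A ^ d * r ^ d := by ring
        _ = A ^ d - 1 := by rw [← hrinv, mul_inv_cancel₀ (ne_of_gt hAd0)]
        _ ≤ _ := hlo
    have h2 : Real.log (A ^ d * (1 - r ^ d)) = Real.log (A ^ d) + Real.log (1 - r ^ d) :=
      Real.log_mul (ne_of_gt hAd0) (by linarith)
    have h3 : -(r ^ d / (1 - r ^ d)) ≤ Real.log (1 - r ^ d) := by
      have hp : (0:ℝ) < 1 - r ^ d := by linarith
      have := Real.log_le_sub_one_of_pos (x := (1 - r ^ d)⁻¹) (by positivity)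
      rw [Real.log_inv] at this
      have heq : (1 - r ^ d)⁻¹ - 1 = r ^ d / (1 - r ^ d) := by field_simp; ring
      linarith [heq ▸ this]
    have h4 : r ^ d / (1 - r ^ d) ≤ r ^ d / (1 - r) := by
      apply div_le_div_of_nonneg_left (pow_nonneg hr0.le d) (by linarith) (by linarith)
    rw [hlogpow]
    linarith
  · -- upper bound
    have h1 : Real.log (‖q ^ d - 1‖) ≤ Real.log (A ^ d * (1 + r ^ d)) := by
      apply Real.log_le_log (by linarith)
      calc ‖q ^ d - 1‖ ≤ A ^ d + 1 := hup
        _ = A ^ d * (1 + r ^ d) := by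
            rw [mul_add, mul_one, ← hrinv, mul_inv_cancel₀ (ne_of_gt hAd0)]
    have h2 : Real.log (A ^ d * (1 + r ^ d)) = Real.log (A ^ d) + Real.log (1 + r ^ d) :=
      Real.log_mul (ne_of_gt hAd0) (by positivity)
    have h3 : Real.log (1 + r ^ d) ≤ r ^ d := by
      have := Real.log_le_sub_one_of_pos (x := 1 + r ^ d) (by positivity)
      linarith
    have h4 : r ^ d ≤ r ^ d / (1 - r) := by
      rw [le_div_iff₀ (by linarith)]
      nlinarith [pow_nonneg hr0.le d]
    rw [hlogpow]
    linarith

end part2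

lemma sumE_bound {q : ℂ} (hq : 1 < ‖q‖) (n : ℕ) :
    ∑ d ∈ Finset.Icc 1 n,
        |Real.log (‖q ^ d - 1‖) - d * Real.log (‖q‖)|
      ≤ ((1 - (‖q‖)⁻¹)⁻¹) ^ 2 := by
  have hA0 : 0 < ‖q‖ := lt_trans one_pos hq
  set r := (‖q‖)⁻¹ with hr
  have hr0 : 0 < r := inv_pos.mpr hA0
  have hr1 : r < 1 := inv_lt_one_of_one_lt₀ hq
  have h1r : 0 < 1 - r := by linarith
  have hsub : Finset.Icc 1 n ⊆ Finset.range (n + 1) := by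
    intro d hd
    rw [Finset.mem_Icc] at hd
    rw [Finset.mem_range]
    omega
  have hgeo : ∑ d ∈ Finset.Icc 1 n, r ^ d ≤ (1 - r)⁻¹ := by
    calc ∑ d ∈ Finset.Icc 1 n, r ^ d
        ≤ ∑ d ∈ Finset.range (n + 1), r ^ d :=
          Finset.sum_le_sum_of_subset_of_nonneg hsub (fun i _ _ => pow_nonneg hr0.le i)
      _ ≤ (1 - r)⁻¹ := by
          have := Summable.sum_le_tsum (Finset.range (n + 1)) (fun i _ => pow_nonneg hr0.le i)
            (summable_geometric_of_lt_one hr0.le hr1)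
          rwa [tsum_geometric_of_lt_one hr0.le hr1] at this
  calc ∑ d ∈ Finset.Icc 1 n,
        |Real.log (‖q ^ d - 1‖) - d * Real.log (‖q‖)|
      ≤ ∑ d ∈ Finset.Icc 1 n, r ^ d / (1 - r) :=
        Finset.sum_le_sum (fun d hd => E_bound hq d (Finset.mem_Icc.mp hd).1)
    _ = (∑ d ∈ Finset.Icc 1 n, r ^ d) / (1 - r) := by rw [Finset.sum_div]
    _ ≤ (1 - r)⁻¹ / (1 - r) := by gcongr
    _ = ((1 - r)⁻¹) ^ 2 := by rw [div_eq_mul_inv, sq]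

lemma term_bound (hq : 1 < ‖q‖) {n m : ℕ} (hm : 1 ≤ m) (hmn : m ≤ n) :
    |Real.log (‖(Polynomial.cyclotomic m ℂ).eval q‖)
        - (Nat.totient m : ℝ) * Real.log (‖q‖)|
      ≤ ∑ d ∈ Finset.Icc 1 n,
          |Real.log (‖q ^ d - 1‖) - d * Real.log (‖q‖)| := by
  set L := Real.log (‖q‖) with hL
  set E : ℕ → ℝ := fun d => Real.log (‖q ^ d - 1‖) - d * L with hE
  have key : Real.log (‖(Polynomial.cyclotomic m ℂ).eval q‖)
        - (Nat.totient m : ℝ) * L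
      = ∑ x ∈ m.divisorsAntidiagonal, (μ x.1 : ℤ) • E x.2 := by
    rw [cyclo_inv hq m (by omega), totient_inv m (by omega), Finset.sum_mul,
      ← Finset.sum_sub_distrib]
    refine Finset.sum_congr rfl fun x _ => ?_
    rw [zsmul_eq_mul, zsmul_eq_mul, zsmul_eq_mul, hE]
    push_cast
    ring
  rw [key]
  have hsub : m.divisors ⊆ Finset.Icc 1 n := by
    intro d hd
    rw [Finset.mem_Icc]
    exact ⟨Nat.pos_of_mem_divisors hd, le_trans (Nat.divisor_le hd) hmn⟩
  calc |∑ x ∈ m.divisorsAntidiagonal, (μ x.1 : ℤ) • E x.2|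
      ≤ ∑ x ∈ m.divisorsAntidiagonal, |(μ x.1 : ℤ) • E x.2| :=
        Finset.abs_sum_le_sum_abs _ _
    _ ≤ ∑ x ∈ m.divisorsAntidiagonal, |E x.2| := by
        refine Finset.sum_le_sum fun x _ => ?_
        rw [zsmul_eq_mul, abs_mul]
        have hμ : |((μ x.1 : ℤ) : ℝ)| ≤ 1 := by exact_mod_cast abs_moebius_le_one
        calc |((μ x.1 : ℤ) : ℝ)| * |E x.2| ≤ 1 * |E x.2| :=
              mul_le_mul_of_nonneg_right hμ (abs_nonneg _)
          _ = |E x.2| := one_mul _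
    _ = ∑ d ∈ m.divisors, |E d| :=
        Nat.sum_divisorsAntidiagonal' (f := fun a b => |E b|)
    _ ≤ ∑ d ∈ Finset.Icc 1 n, |E d| :=
        Finset.sum_le_sum_of_subset_of_nonneg hsub (fun d _ _ => abs_nonneg _)

lemma total_bound (hq : 1 < ‖q‖) (n : ℕ) :
    |Real.log (‖∏ ℓ ∈ Finset.Icc 1 n, (Polynomial.cyclotomic ℓ ℂ).eval q‖)
        - (∑ ℓ ∈ Finset.Icc 1 n, (Nat.totient ℓ : ℝ)) * Real.log (‖q‖)|
      ≤ n * ((1 - (‖q‖)⁻¹)⁻¹) ^ 2 := by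
  set L := Real.log (‖q‖) with hL
  have hS : Real.log (‖∏ ℓ ∈ Finset.Icc 1 n, (Polynomial.cyclotomic ℓ ℂ).eval q‖)
      = ∑ ℓ ∈ Finset.Icc 1 n, Real.log (‖(Polynomial.cyclotomic ℓ ℂ).eval q‖) := by
    rw [norm_prod]
    rw [Real.log_prod]
    intro ℓ hℓ
    exact norm_ne_zero_iff.mpr (cyclo_ne_zero hq ℓ (Finset.mem_Icc.mp hℓ).1)
  rw [hS, Finset.sum_mul, ← Finset.sum_sub_distrib]
  calc |∑ ℓ ∈ Finset.Icc 1 n,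
        (Real.log (‖(Polynomial.cyclotomic ℓ ℂ).eval q‖) - (Nat.totient ℓ : ℝ) * L)|
      ≤ ∑ ℓ ∈ Finset.Icc 1 n,
          |Real.log (‖(Polynomial.cyclotomic ℓ ℂ).eval q‖) - (Nat.totient ℓ : ℝ) * L| :=
        Finset.abs_sum_le_sum_abs _ _
    _ ≤ ∑ _ℓ ∈ Finset.Icc 1 n, ((1 - (‖q‖)⁻¹)⁻¹) ^ 2 := by
        refine Finset.sum_le_sum fun m hm => ?_
        rw [Finset.mem_Icc] at hm
        exact (term_bound hq hm.1 hm.2).trans (sumE_bound hq n)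
    _ = n * ((1 - (‖q‖)⁻¹)⁻¹) ^ 2 := by
        rw [Finset.sum_const, Nat.card_Icc]
        simp [nsmul_eq_mul]

/-- For complex `q` with `|q| > 1`,
`lim_{n→∞} (1/n²) log |d_n(q)| = (3/π²) log |q|`, where `d_n(q) = ∏_{ℓ=1}^n Φ_ℓ(q)`. -/
theorem dn_asymptotics (q : ℂ) (hq : 1 < ‖q‖) :
    Filter.Tendsto
      (fun n : ℕ =>
        (1 / (n : ℝ) ^ 2) *
          Real.log ‖∏ ℓ ∈ Finset.Icc 1 n, (Polynomial.cyclotomic ℓ ℂ).eval q‖)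
      Filter.atTop
      (nhds (3 / Real.pi ^ 2 * Real.log ‖q‖)) := by
  have hlem1 := totient_asymptotics_aux moebius_tsum_sq totient_sum_eq
  set L := Real.log (‖q‖) with hL
  set C := ((1 - (‖q‖)⁻¹)⁻¹) ^ 2 with hC
  set S : ℕ → ℝ := fun n =>
    Real.log (‖∏ ℓ ∈ Finset.Icc 1 n, (Polynomial.cyclotomic ℓ ℂ).eval q‖) with hSdef
  set T : ℕ → ℝ := fun n => ∑ ℓ ∈ Finset.Icc 1 n, (Nat.totient ℓ : ℝ) with hT
  have h1 : Filter.Tendsto (fun n : ℕ => T n / (n:ℝ)^2 * L) atTop (𝓝 (3 / π ^ 2 * L)) :=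
    hlem1.mul_const L
  have h2 : Filter.Tendsto (fun n : ℕ => (S n - T n * L) / (n:ℝ)^2) atTop (𝓝 0) := by
    apply squeeze_zero_norm' (a := fun n : ℕ => C / n)
    · filter_upwards [eventually_ge_atTop 1] with n hn
      have hn0 : (0:ℝ) < n := by exact_mod_cast hn
      rw [Real.norm_eq_abs, abs_div, abs_of_nonneg (by positivity : (0:ℝ) ≤ (n:ℝ)^2)]
      calc |S n - T n * L| / (n:ℝ)^2 ≤ ((n:ℝ) * C) / (n:ℝ)^2 := by
            gcongr
            exact total_bound hq n
        _ = C / n := by field_simp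
    · exact tendsto_const_div_atTop_nhds_zero_nat C
  have h3 := h1.add h2
  rw [add_zero] at h3
  refine h3.congr' ?_
  filter_upwards [eventually_ge_atTop 1] with n hn
  have hn0 : (n:ℝ) ≠ 0 := by
    have : (0:ℝ) < n := by exact_mod_cast hn
    exact ne_of_gt this
  rw [div_mul_eq_mul_div, ← add_div, one_div, inv_mul_eq_div]
  congr 1
  ring
end

section
/- As rational functions of T, for integers n≥0, 1≤ℓ, and 0≤j≤n: q^{-n(n+1)/2} (q^{-ℓn}T;q)_n (T-q^{-j}) / ((T-1)(T-q^{-1})⋯(T-q^{-n})) = (-1)^n q^{-ℓn²-n} + ∑_{i=0, i≠j}^{n} (-1)^i q^{-(n-i)²/2-(n+i)/2} [n choose i]_{1/q} [ℓn+i choose n]_{1/q} (q^{-i}-q^{-j})/(T-q^{-i}). -/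
/-- The Gaussian binomial coefficient `[n choose i]_p = (p;p)_n/((p;p)_i (p;p)_{n-i})`. -/
noncomputable def qbinom (p : ℝ) (n i : ℕ) : ℝ :=
  (∏ m ∈ Finset.range n, (1 - p ^ (m + 1))) /
    ((∏ m ∈ Finset.range i, (1 - p ^ (m + 1))) *
      ∏ m ∈ Finset.range (n - i), (1 - p ^ (m + 1)))

/-!
Put `x = q⁻¹`. The left side is `p(T) / ∏_{i ≤ n} (T - xⁱ)` for a polynomial `p` of degree
`n + 1`, so Lagrange interpolation at the nodes `xⁱ` gives its partial fraction expansion: the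
constant is the top coefficient of `p`, and the residue at `xⁱ` is `p(xⁱ) / ∏_{k ≠ i} (xⁱ - xᵏ)`,
which vanishes for `i = j`. Splitting this product at `k = i` gives `(x;x)_i` and `(x;x)_{n-i}` up
to a sign and a power of `x`, while `(q^{-ℓn}T;q)_n` at `T = xⁱ` is
`(x;x)_{ℓn+i} / (x;x)_{ℓn+i-n}`; what remains is bookkeeping of the exponents of `x`.
-/

open Finset Polynomial

theorem Finset.prod_range_succ_erase {M : Type*} [CommMonoid M] (f : ℕ → M) {i n : ℕ}
    (hi : i ≤ n) :
    ∏ k ∈ (range (n + 1)).erase i, f k =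
      (∏ k ∈ range i, f k) * ∏ k ∈ range (n - i), f (i + 1 + k) := by
  have hsplit : (range (n + 1)).erase i = range i ∪ Ico (i + 1) (n + 1) := by
    ext k; simp only [mem_erase, mem_range, mem_union, mem_Ico]; omega
  have hdisj : Disjoint (range i) (Ico (i + 1) (n + 1)) := by
    rw [disjoint_left]; intro k; simp only [mem_range, mem_Ico]; omega
  rw [hsplit, prod_union hdisj, prod_Ico_eq_prod_range, show n + 1 - (i + 1) = n - i by omega]

theorem sum_range_id_add (a b : ℕ) :
    ∑ k ∈ range (a + b), k = ∑ k ∈ range a, k + ∑ k ∈ range b, k + a * b := by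
  rw [sum_range_add, sum_add_distrib, sum_const, card_range, smul_eq_mul]; ring

theorem triangle_eq_sum_range (n : ℕ) : n * (n + 1) / 2 = ∑ k ∈ range (n + 1), k := by
  rw [sum_range_id, Nat.add_sub_cancel, mul_comm]

theorem triangle_add_sum_range_sub {n m : ℕ} (hm : n ≤ m) :
    n * (n + 1) / 2 + ∑ t ∈ range n, (m - t) = m * n + n := by
  have h : ∑ t ∈ range n, (t + (m - t)) = m * n := by
    rw [sum_congr rfl fun t ht => Nat.add_sub_cancel' ((mem_range.mp ht).le.trans hm), sum_const,
      card_range, smul_eq_mul, mul_comm]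
  rw [triangle_eq_sum_range, sum_range_succ, ← h, sum_add_distrib]
  ring

theorem residue_exponent_eq {i n : ℕ} (hi : i ≤ n) :
    ((n - i) ^ 2 + (n + i)) / 2 + ∑ k ∈ range i, k + i * (n - i) = n * (n + 1) / 2 := by
  obtain ⟨d, rfl⟩ := Nat.exists_eq_add_of_le hi
  have hgauss := sum_range_id_mul_two (d + 1)
  have hhalf : (d ^ 2 + (i + d + i)) / 2 = ∑ k ∈ range (d + 1), k + i := by
    apply Nat.div_eq_of_eq_mul_left two_pos
    rw [add_mul, hgauss, Nat.add_sub_cancel]; ring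
  rw [Nat.add_sub_cancel_left, hhalf, triangle_eq_sum_range, add_assoc i d 1,
    sum_range_id_add i (d + 1)]
  ring

namespace Lagrange

variable {F ι : Type*} [Field F] [DecidableEq ι] {s : Finset ι} {v : ι → F}

theorem eval_div_eval_nodal (hvs : Set.InjOn v s) {p : F[X]} (hp : p.natDegree ≤ #s) {x : F}
    (hx : ∀ i ∈ s, x ≠ v i) :
    p.eval x / (nodal s v).eval x =
      p.coeff #s + ∑ i ∈ s, nodalWeight s v i * p.eval (v i) / (x - v i) := by
  set r := p - C (p.coeff #s) * nodal s v
  have hr : r.degree < #s := by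
    rw [degree_lt_iff_coeff_zero]
    intro k hk
    rcases hk.eq_or_lt with rfl | hk
    · have h1 : (nodal s v).coeff #s = 1 := by
        simpa [natDegree_nodal] using (nodal_monic (s := s) (v := v)).coeff_natDegree
      simp [r, coeff_C_mul, h1]
    · simp [r, coeff_C_mul, coeff_eq_zero_of_natDegree_lt (hp.trans_lt hk),
        coeff_eq_zero_of_natDegree_lt (natDegree_nodal (s := s) (v := v) ▸ hk)]
  have hr_nodes : ∀ i ∈ s, r.eval (v i) = p.eval (v i) := fun i hi => by
    simp [r, eval_nodal_at_node hi]
  have key := congrArg (eval x) (eq_interpolate_of_eval_eq _ hvs hr hr_nodes)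
  rw [eval_interpolate_not_at_node _ hx] at key
  simp only [r, eval_sub, eval_mul, eval_C] at key
  have hsum : ∑ i ∈ s, nodalWeight s v i * p.eval (v i) / (x - v i) * (nodal s v).eval x =
      (nodal s v).eval x * ∑ i ∈ s, nodalWeight s v i * (x - v i)⁻¹ * p.eval (v i) := by
    rw [mul_sum]
    exact sum_congr rfl fun i _ => by ring
  rw [div_eq_iff (eval_nodal_not_at_node hx), add_mul, sum_mul]
  linear_combination key - hsum

end Lagrange

section

variable {R ι : Type*} [CommRing R] (s : Finset ι) (b : ι → R)

theorem natDegree_one_sub_C_mul_X_le (a : R) : (1 - C a * X).natDegree ≤ 1 :=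
  (natDegree_sub_le _ _).trans (max_le (by simp) ((natDegree_C_mul_le _ _).trans natDegree_X_le))

theorem natDegree_prod_one_sub_C_mul_X_le : (∏ t ∈ s, (1 - C (b t) * X)).natDegree ≤ #s :=
  (natDegree_prod_le _ _).trans <|
    (sum_le_sum fun t _ => natDegree_one_sub_C_mul_X_le (b t)).trans (by simp)

theorem coeff_prod_one_sub_C_mul_X : (∏ t ∈ s, (1 - C (b t) * X)).coeff #s = ∏ t ∈ s, -b t := by
  rw [← mul_one #s, coeff_prod_of_natDegree_le _ _ 1 fun t _ => natDegree_one_sub_C_mul_X_le (b t)]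
  refine prod_congr rfl fun t _ => ?_
  rw [coeff_sub, coeff_one, coeff_C_mul_X]; simp

end

/-- `(x; x)_k` -/
def qPochhammer {R : Type*} [CommRing R] (x : R) (k : ℕ) : R :=
  ∏ s ∈ range k, (1 - x ^ (s + 1))

section

variable {R : Type*} [CommRing R] (x : R)

theorem qPochhammer_add (a c : ℕ) :
    qPochhammer x (a + c) = qPochhammer x a * ∏ t ∈ range c, (1 - x ^ (a + c - t)) := by
  rw [qPochhammer, qPochhammer, prod_range_add]
  congr 1
  rw [← prod_range_reflect]
  refine prod_congr rfl fun t ht => ?_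
  rw [show a + (c - 1 - t) + 1 = a + c - t by have := mem_range.mp ht; omega]

theorem prod_range_pow_sub_pow (i : ℕ) :
    ∏ k ∈ range i, (x ^ i - x ^ k) = (-1) ^ i * x ^ (∑ k ∈ range i, k) * qPochhammer x i := by
  have h : ∀ k ∈ range i, x ^ i - x ^ k = -1 * x ^ k * (1 - x ^ (i - 1 - k + 1)) := by
    intro k hk
    have hk' := mem_range.mp hk
    have hpow : x ^ i = x ^ k * x ^ (i - k) := by rw [← pow_add, Nat.add_sub_cancel' hk'.le]
    rw [show i - 1 - k + 1 = i - k by omega, hpow]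
    ring
  rw [prod_congr rfl h, prod_mul_distrib, prod_mul_distrib, prod_const, card_range,
    prod_pow_eq_pow_sum, qPochhammer, prod_range_reflect (fun k => 1 - x ^ (k + 1))]

theorem prod_range_pow_sub_pow_add (i d : ℕ) :
    ∏ k ∈ range d, (x ^ i - x ^ (i + 1 + k)) = x ^ (i * d) * qPochhammer x d := by
  have h : ∀ k ∈ range d, x ^ i - x ^ (i + 1 + k) = x ^ i * (1 - x ^ (k + 1)) := fun k _ => by
    rw [mul_sub, ← pow_add]; ring_nf
  rw [prod_congr rfl h, prod_mul_distrib, prod_const, card_range, pow_mul, qPochhammer]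

end

theorem qPochhammer_ne_zero {R : Type*} [CommRing R] [IsDomain R] {x : R}
    (hx : ∀ k, x ^ (k + 1) ≠ 1) (k : ℕ) : qPochhammer x k ≠ 0 :=
  prod_ne_zero_iff.mpr fun s _ => sub_ne_zero.mpr (hx s).symm

theorem qbinom_eq_qPochhammer (x : ℝ) (n i : ℕ) :
    qbinom x n i = qPochhammer x n / (qPochhammer x i * qPochhammer x (n - i)) := rfl

theorem qbinom_mul_prod_erase_pow_sub_pow {x : ℝ} (hx : ∀ k, x ^ (k + 1) ≠ 1) {n m i : ℕ}
    (hi : i ≤ n) (hm : n ≤ m) :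
    (-1) ^ i * x ^ (((n - i) ^ 2 + (n + i)) / 2) * qbinom x n i * qbinom x (m + i) n *
        ∏ k ∈ (range (n + 1)).erase i, (x ^ i - x ^ k) =
      x ^ (n * (n + 1) / 2) * ∏ t ∈ range n, (1 - x ^ (m - t) * x ^ i) := by
  have hshift : ∏ t ∈ range n, (1 - x ^ (m - t) * x ^ i) =
      qPochhammer x (m + i) / qPochhammer x (m + i - n) := by
    rw [eq_div_iff (qPochhammer_ne_zero hx _), mul_comm,
      show m + i = m + i - n + n by omega, qPochhammer_add, Nat.add_sub_cancel]
    congr 1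
    refine prod_congr rfl fun t ht => ?_
    rw [← pow_add, show m + i - n + n - t = m - t + i by have := mem_range.mp ht; omega]
  rw [prod_range_succ_erase _ hi, prod_range_pow_sub_pow, prod_range_pow_sub_pow_add, hshift,
    qbinom_eq_qPochhammer, qbinom_eq_qPochhammer, ← residue_exponent_eq hi, pow_add, pow_add]
  have hsign : ((-1 : ℝ) ^ i) ^ 2 = 1 := by rw [← pow_mul, pow_mul']; simp
  have := qPochhammer_ne_zero hx n
  have := qPochhammer_ne_zero hx i
  have := qPochhammer_ne_zero hx (n - i)
  have := qPochhammer_ne_zero hx (m + i - n)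
  field_simp
  rw [hsign, one_mul]

theorem partial_fraction_pow {x : ℝ} (hx0 : 0 < x) (hx1 : x ≠ 1) {n m : ℕ} (hm : n ≤ m) (j : ℕ)
    {T : ℝ} (hT : ∀ i ∈ range (n + 1), T ≠ x ^ i) :
    x ^ (n * (n + 1) / 2) * (∏ t ∈ range n, (1 - x ^ (m - t) * T)) * (T - x ^ j) /
        ∏ i ∈ range (n + 1), (T - x ^ i) =
      (-1) ^ n * x ^ (m * n + n) +
        ∑ i ∈ (range (n + 1)).erase j,
          (-1) ^ i * x ^ (((n - i) ^ 2 + (n + i)) / 2) * qbinom x n i * qbinom x (m + i) n *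
            (x ^ i - x ^ j) / (T - x ^ i) := by
  set P : ℝ[X] := C (x ^ (n * (n + 1) / 2)) * ∏ t ∈ range n, (1 - C (x ^ (m - t)) * X)
  set p : ℝ[X] := P * (X - C (x ^ j))
  have heval : ∀ y, p.eval y =
      x ^ (n * (n + 1) / 2) * (∏ t ∈ range n, (1 - x ^ (m - t) * y)) * (y - x ^ j) :=
    fun y => by simp [p, P, eval_prod]
  have hP : P.natDegree ≤ n := (natDegree_C_mul_le _ _).trans <| by
    simpa using natDegree_prod_one_sub_C_mul_X_le (range n) (fun t => x ^ (m - t))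
  have hdeg : p.natDegree ≤ #(range (n + 1)) := by
    rw [card_range]
    exact natDegree_mul_le_of_le hP (natDegree_X_sub_C_le _)
  have hcoeff : p.coeff #(range (n + 1)) = (-1) ^ n * x ^ (m * n + n) := by
    have hlead := coeff_prod_one_sub_C_mul_X (range n) (fun t => x ^ (m - t))
    have hX : (X - C (x ^ j)).coeff 1 = 1 := by
      rw [coeff_sub, coeff_X_one, coeff_C]; simp
    rw [card_range] at hlead
    rw [card_range, coeff_mul_add_eq_of_natDegree_le hP (natDegree_X_sub_C_le _), coeff_C_mul,
      hlead, prod_neg, card_range, hX, ← triangle_add_sum_range_sub hm, pow_add,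
      ← prod_pow_eq_pow_sum]
    ring
  have hres : ∀ i ∈ range (n + 1),
      Lagrange.nodalWeight (range (n + 1)) (x ^ ·) i * p.eval (x ^ i) =
        (-1) ^ i * x ^ (((n - i) ^ 2 + (n + i)) / 2) * qbinom x n i * qbinom x (m + i) n *
          (x ^ i - x ^ j) := by
    intro i hi
    have hnodes : ∏ k ∈ (range (n + 1)).erase i, (x ^ i - x ^ k) ≠ 0 :=
      prod_ne_zero_iff.mpr fun k hk => sub_ne_zero.mpr fun h =>
        ne_of_mem_erase hk (pow_right_injective₀ hx0 hx1 h).symm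
    have hroot : ∀ k, x ^ (k + 1) ≠ 1 := fun k =>
      (pow_eq_one_iff_of_nonneg hx0.le k.succ_ne_zero).not.mpr hx1
    rw [Lagrange.nodalWeight, prod_inv_distrib, heval,
      ← qbinom_mul_prod_erase_pow_sub_pow hroot (Nat.lt_succ_iff.mp (mem_range.mp hi)) hm]
    field_simp
  rw [← heval, ← Lagrange.eval_nodal (s := range (n + 1)) (v := (x ^ ·)),
    Lagrange.eval_div_eval_nodal (pow_right_injective₀ hx0 hx1).injOn hdeg hT, hcoeff,
    sum_erase _ (by simp)]
  congr 1
  exact sum_congr rfl fun i hi => by rw [hres i hi]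

theorem partial_fraction_H_general (q : ℝ) (hq0 : 0 < q) (hq1 : q ≠ 1) (n L j : ℕ)
    (hL : 1 ≤ L)
    (T : ℝ) (hT : (∏ i ∈ Finset.range (n + 1), (T - q ^ (-(i : ℤ)))) ≠ 0) :
    q ^ (-((n * (n + 1) / 2 : ℕ) : ℤ)) *
        (∏ t ∈ Finset.range n, (1 - q ^ ((t : ℤ) - (L * n : ℤ)) * T)) *
        (T - q ^ (-(j : ℤ))) /
        (∏ i ∈ Finset.range (n + 1), (T - q ^ (-(i : ℤ)))) =
      (-1 : ℝ) ^ n * q ^ (-((L * n ^ 2 + n : ℕ) : ℤ)) +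
        ∑ i ∈ (Finset.range (n + 1)).erase j,
          (-1 : ℝ) ^ i * q ^ (-((((n - i) ^ 2 + (n + i)) / 2 : ℕ) : ℤ)) *
            qbinom (1 / q) n i * qbinom (1 / q) (L * n + i) n *
            (q ^ (-(i : ℤ)) - q ^ (-(j : ℤ))) / (T - q ^ (-(i : ℤ))) := by
  have hm : n ≤ L * n := Nat.le_mul_of_pos_left n hL
  have hpow : ∀ k : ℕ, q ^ (-(k : ℤ)) = (1 / q) ^ k := fun k => by
    rw [zpow_neg, zpow_natCast, one_div, inv_pow]
  have hprod : ∏ t ∈ range n, (1 - q ^ ((t : ℤ) - (L * n : ℤ)) * T) =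
      ∏ t ∈ range n, (1 - (1 / q) ^ (L * n - t) * T) := by
    refine prod_congr rfl fun t ht => ?_
    rw [← hpow, Nat.cast_sub ((mem_range.mp ht).le.trans hm)]
    push_cast
    ring_nf
  have hx1 : 1 / q ≠ 1 := by rwa [ne_eq, div_eq_one_iff_eq hq0.ne', eq_comm]
  rw [hprod]
  simp only [hpow] at hT ⊢
  rw [partial_fraction_pow (by positivity) hx1 hm j
    fun i hi => sub_ne_zero.mp (prod_ne_zero_iff.mp hT i hi), show L * n ^ 2 = L * n * n by ring]

/-- Partial fraction decomposition of
`q^{-n(n+1)/2} (q^{-ℓn}T;q)_n (T-q^{-j}) / ((T-1)(T-q^{-1})⋯(T-q^{-n}))`. -/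
theorem partial_fraction_H (q : ℝ) (hq0 : 0 < q) (hq1 : q ≠ 1) (n L j : ℕ)
    (hL : 1 ≤ L) (hj : j ≤ n)
    (T : ℝ) (hT : (∏ i ∈ Finset.range (n + 1), (T - q ^ (-(i : ℤ)))) ≠ 0) :
    q ^ (-((n * (n + 1) / 2 : ℕ) : ℤ)) *
        (∏ t ∈ Finset.range n, (1 - q ^ ((t : ℤ) - (L * n : ℤ)) * T)) *
        (T - q ^ (-(j : ℤ))) /
        (∏ i ∈ Finset.range (n + 1), (T - q ^ (-(i : ℤ)))) =
      (-1 : ℝ) ^ n * q ^ (-((L * n ^ 2 + n : ℕ) : ℤ)) +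
        ∑ i ∈ (Finset.range (n + 1)).erase j,
          (-1 : ℝ) ^ i * q ^ (-((((n - i) ^ 2 + (n + i)) / 2 : ℕ) : ℤ)) *
            qbinom (1 / q) n i * qbinom (1 / q) (L * n + i) n *
            (q ^ (-(i : ℤ)) - q ^ (-(j : ℤ))) / (T - q ^ (-(i : ℤ))) :=
  partial_fraction_H_general q hq0 hq1 n L j hL T hT
end
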